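/- arXiv:1104.0219 — 9 statements merged into one kernel-verified Lean document; each statement's English description precedes it below -/
import Mathlib

section
/- If X is a regular closed subset of ℝⁿ and X is connected, then every connected component of the regular closed complement −X = closure(ℝⁿ \ X) has a connected topological boundary. -/
/-!
`ℝⁿ` is unicoherent: if it is the union of two closed connected sets `H` and `K`, then `H ∩ K` is
connected. Otherwise a Urysohn function separating two pieces of `H ∩ K` yields a map to the
circle, going halfway round in `H` and back in `K`, which has no continuous lift to `ℝ`,
contradicting simple connectivity.

Let `C` be a component of `−X`. A point of `C` off `X` has its component in the open set `Xᶜ`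
inside `C`, so `C \ X` is open; as `X` is regular closed, `X` misses the interior of `−X`, hence
`frontier C = C ∩ X`. Every component of `−X` meets `X`, since otherwise it would be clopen in
`ℝⁿ`, so `X ∪ Cᶜ = (C \ X)ᶜ` is connected. Unicoherence applied to `C` and `(C \ X)ᶜ` finishes.
-/

open Set Real

theorem IsPreconnected.inter_of_union_eq_univ {A : Type*} [TopologicalSpace A] [NormalSpace A]
    [SimplyConnectedSpace A] [LocallyPathConnectedSpace A] {H K : Set A}
    (hHc : IsClosed H) (hKc : IsClosed K) (hH : IsPreconnected H) (hK : IsPreconnected K)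
    (hHK : H ∪ K = univ) : IsPreconnected (H ∩ K) := by
  classical
  rw [isPreconnected_iff_subset_of_fully_disjoint_closed (hHc.inter hKc)]
  intro u v hu hv hcover huv
  by_contra! hsplit
  obtain ⟨x₀, hx₀, hx₀u⟩ := not_subset.1 hsplit.1
  obtain ⟨x₁, hx₁, hx₁v⟩ := not_subset.1 hsplit.2
  obtain ⟨φ, hφu, hφv, -⟩ := exists_continuous_zero_one_of_isClosed hu hv huv
  have hφx₀ : φ x₀ = 1 := hφv ((hcover hx₀).resolve_left hx₀u)
  have hφx₁ : φ x₁ = 0 := hφu ((hcover hx₁).resolve_right hx₁v)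
  set g : A → Circle :=
    H.piecewise (fun x ↦ Circle.exp (π * φ x)) (fun x ↦ Circle.exp (-(π * φ x)))
  have hgH : EqOn g (fun x ↦ Circle.exp (π * φ x)) H :=
    fun x hx ↦ piecewise_eq_of_mem _ _ _ hx
  have hgK : EqOn g (fun x ↦ Circle.exp (-(π * φ x))) K := by
    intro x hx
    by_cases hxH : x ∈ H
    · rw [hgH hxH]
      rcases hcover ⟨hxH, hx⟩ with hxu | hxv
      · simp [hφu hxu]
      · simp only [hφv hxv, Pi.one_apply, mul_one]
        exact Circle.exp_eq_exp.2 ⟨1, by push_cast; ring⟩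
    · exact piecewise_eq_of_notMem _ _ _ hxH
  have hg : Continuous g := by
    rw [← continuousOn_univ, ← hHK]
    refine ContinuousOn.union_of_isClosed ?_ ?_ hHc hKc
    · exact (by fun_prop : Continuous fun x ↦ Circle.exp (π * φ x)).continuousOn.congr hgH
    · exact (by fun_prop : Continuous fun x ↦ Circle.exp (-(π * φ x))).continuousOn.congr hgK
  obtain ⟨θ, ⟨hθx₁, hθ⟩, -⟩ :=
    Circle.isCoveringMap_exp.existsUnique_continuousMap_lifts ⟨g, hg⟩ x₁ 0
      (by simp [hgH hx₁.1, hφx₁])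
  have hθH : EqOn θ (fun x ↦ π * φ x) H :=
    Circle.isCoveringMap_exp.eqOn_of_comp_eqOn hH θ.continuous.continuousOn (by fun_prop)
      (fun x hx ↦ (congrFun hθ x).trans (hgH hx)) hx₁.1 (by simp [hθx₁, hφx₁])
  have hθK : EqOn θ (fun x ↦ -(π * φ x)) K :=
    Circle.isCoveringMap_exp.eqOn_of_comp_eqOn hK θ.continuous.continuousOn (by fun_prop)
      (fun x hx ↦ (congrFun hθ x).trans (hgK hx)) hx₁.2 (by simp [hθx₁, hφx₁])
  have h := (hθH hx₀.1).symm.trans (hθK hx₀.2)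
  simp only [hφx₀, mul_one] at h
  linarith [pi_pos]

section
variable {α : Type*} [TopologicalSpace α]

theorem isClosed_connectedComponentIn {F : Set α} (hF : IsClosed F) (x : α) :
    IsClosed (connectedComponentIn F x) := by
  by_cases hx : x ∈ F
  · refine isClosed_of_closure_subset <|
      isPreconnected_connectedComponentIn.closure.subset_connectedComponentIn
        (subset_closure (mem_connectedComponentIn hx)) ?_
    exact hF.closure_subset_iff.2 (connectedComponentIn_subset _ _)
  · rw [connectedComponentIn_eq_empty hx]
    exact isClosed_empty

variable {X A : Set α}

theorem connectedComponentIn_compl_subset_of_mem (hXA : Xᶜ ⊆ A) {y z : α}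
    (hz : z ∈ connectedComponentIn A y) :
    connectedComponentIn Xᶜ z ⊆ connectedComponentIn A y :=
  connectedComponentIn_eq hz ▸ connectedComponentIn_mono z hXA

variable [LocallyConnectedSpace α]

theorem isOpen_connectedComponentIn_diff (hX : IsClosed X) (hXA : Xᶜ ⊆ A) (y : α) :
    IsOpen (connectedComponentIn A y \ X) := by
  refine isOpen_iff_forall_mem_open.2 fun z ⟨hz, hzX⟩ ↦ ⟨connectedComponentIn Xᶜ z, ?_,
    hX.isOpen_compl.connectedComponentIn, mem_connectedComponentIn hzX⟩
  exact subset_sdiff.2 ⟨connectedComponentIn_compl_subset_of_mem hXA hz,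
    disjoint_compl_left.mono_left (connectedComponentIn_subset _ _)⟩

theorem frontier_connectedComponentIn_closure_compl (hX : X = closure (interior X)) (y : α) :
    frontier (connectedComponentIn (closure Xᶜ) y) =
      connectedComponentIn (closure Xᶜ) y ∩ X := by
  have hXc : IsClosed X := hX ▸ isClosed_closure
  have hinterior : interior (connectedComponentIn (closure Xᶜ) y)
      = connectedComponentIn (closure Xᶜ) y \ X := by
    refine Subset.antisymm (subset_sdiff.2 ⟨interior_subset, ?_⟩)
      (interior_maximal sdiff_subset (isOpen_connectedComponentIn_diff hXc subset_closure y))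
    have hint : interior (closure Xᶜ) = Xᶜ := by rw [closure_compl, interior_compl, ← hX]
    exact disjoint_compl_left.mono_left
      ((interior_mono (connectedComponentIn_subset _ _)).trans hint.subset)
  rw [(isClosed_connectedComponentIn isClosed_closure y).frontier_eq, hinterior,
    sdiff_sdiff_right_self]

variable [ConnectedSpace α]

theorem connectedComponentIn_inter_nonempty (hX : IsClosed X) (hA : IsClosed A)
    (hXA : Xᶜ ⊆ A) (hAu : A ≠ univ) {z : α} (hz : z ∈ A) :
    (connectedComponentIn A z ∩ X).Nonempty := by
  by_contra! hempty
  have hdiff : connectedComponentIn A z \ X = connectedComponentIn A z := by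
    rwa [sdiff_eq_left, disjoint_iff_inter_eq_empty]
  have hclopen : IsClopen (connectedComponentIn A z) :=
    ⟨isClosed_connectedComponentIn hA z, hdiff ▸ isOpen_connectedComponentIn_diff hX hXA z⟩
  rcases isClopen_iff.1 hclopen with h | h
  · exact (connectedComponentIn_nonempty_iff.2 hz).ne_empty h
  · exact hAu (univ_subset_iff.1 (h ▸ connectedComponentIn_subset A z))

theorem isPreconnected_compl_connectedComponentIn_diff (hXc : IsPreconnected X)
    (hX : IsClosed X) (hA : IsClosed A) (hXA : Xᶜ ⊆ A) (hAu : A ≠ univ) (y : α) :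
    IsPreconnected (connectedComponentIn A y \ X)ᶜ := by
  obtain ⟨x₀, hx₀⟩ : X.Nonempty :=
    nonempty_iff_ne_empty.2 fun h ↦ hAu (univ_subset_iff.1 (by simpa [h] using hXA))
  rw [compl_sdiff]
  refine isPreconnected_of_forall x₀ fun z hz ↦ ?_
  by_cases hzX : z ∈ X
  · exact ⟨X, subset_union_left, hx₀, hzX, hXc⟩
  have hzC : z ∉ connectedComponentIn A y := hz.resolve_left hzX
  have hzA : z ∈ A := hXA hzX
  obtain ⟨w, hwD, hwX⟩ := connectedComponentIn_inter_nonempty hX hA hXA hAu hzA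
  refine ⟨X ∪ connectedComponentIn A z, union_subset_union_right _ ?_, Or.inl hx₀,
    Or.inr (mem_connectedComponentIn hzA),
    hXc.union w hwX hwD isPreconnected_connectedComponentIn⟩
  intro w hwz hwy
  have hzy : connectedComponentIn A z = connectedComponentIn A y :=
    (connectedComponentIn_eq hwz).trans (connectedComponentIn_eq hwy).symm
  exact hzC (hzy ▸ mem_connectedComponentIn hzA)

end

/-- If `X` is a regular closed subset of `ℝⁿ` and `X` is connected, then every connected
component of the regular closed complement `−X = closure (Xᶜ)` has a connected boundary. -/
theorem regularClosed_component_frontier_connected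
    (n : ℕ) (X : Set (Fin n → ℝ))
    (hreg : X = closure (interior X))
    (hconn : IsConnected X) :
    ∀ y ∈ closure Xᶜ,
      IsConnected (frontier (connectedComponentIn (closure Xᶜ) y)) := by
  intro y hy
  have hXc : IsClosed X := hreg ▸ isClosed_closure
  have hAu : closure Xᶜ ≠ univ := by
    rw [closure_compl, Ne, compl_univ_iff, ← not_nonempty_iff_eq_empty, not_not,
      ← closure_nonempty_iff, ← hreg]
    exact hconn.nonempty
  have hCu : connectedComponentIn (closure Xᶜ) y ≠ univ := fun h ↦
    hAu (univ_subset_iff.1 (h ▸ connectedComponentIn_subset _ _))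
  refine ⟨nonempty_frontier_iff.2 ⟨⟨y, mem_connectedComponentIn hy⟩, hCu⟩, ?_⟩
  have h := IsPreconnected.inter_of_union_eq_univ
    (K := connectedComponentIn (closure Xᶜ) y)
    (isOpen_connectedComponentIn_diff hXc subset_closure y).isClosed_compl
    (isClosed_connectedComponentIn isClosed_closure y)
    (isPreconnected_compl_connectedComponentIn_diff hconn.isPreconnected hXc isClosed_closure
      subset_closure hAu y)
    isPreconnected_connectedComponentIn
    (by rw [Set.compl_sdiff, union_assoc, compl_union_self, union_univ])
  rwa [Set.compl_sdiff, union_inter_distrib_right, compl_inter_self, union_empty, inter_comm,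
    ← frontier_connectedComponentIn_closure_compl hreg] at h
end

section
/- If X is a connected subset of ℝⁿ, then every connected component of ℝⁿ \ X has a connected boundary. -/
/-!
The key fact is that `ℝⁿ` is unicoherent: if it is the union of two closed connected sets `M`
and `N`, then `M ∩ N` is connected. Otherwise split `M ∩ N` into disjoint nonempty closed sets
`A` and `B`, take an Urysohn function `φ` that is `0` on `A` and `1` on `B`, and glue
`exp (iπφ)` on `M` with `exp (-iπφ)` on `N` into a map to the circle. As `ℝⁿ` is simply
connected, this map lifts to a real function `θ`; then `θ - πφ` is constant on `M` and `θ + πφ`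
is constant on `N`, which is impossible at a point of `A` and a point of `B`.

Newman's theorem follows with `M = closure C` and `N = closure Cᶜ`, whose intersection is the
frontier of `C`. The set `N` is connected because `Cᶜ` is `X` together with the other
components of `Xᶜ`, and the closure of each of them meets `closure X`.
-/

open Set

theorem Circle.exists_continuous_lift {A : Type*} [TopologicalSpace A] [SimplyConnectedSpace A]
    [LocallyPathConnectedSpace A] (f : C(A, Circle)) :
    ∃ θ : C(A, ℝ), ∀ x, Circle.exp (θ x) = f x := by
  obtain ⟨a₀⟩ := (inferInstance : Nonempty A)
  obtain ⟨e₀, he₀⟩ := Circle.exp_surjective (f a₀)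
  obtain ⟨θ, -, hθ⟩ :=
    (Circle.isCoveringMap_exp.existsUnique_continuousMap_lifts f a₀ e₀ he₀).exists
  exact ⟨θ, congrFun hθ⟩

theorem IsPreconnected.sub_eq_sub_of_circleExp_eq {α : Type*} [TopologicalSpace α] {S : Set α}
    (hS : IsPreconnected S) {f g : α → ℝ} (hf : ContinuousOn f S) (hg : ContinuousOn g S)
    (hfg : ∀ x ∈ S, Circle.exp (f x) = Circle.exp (g x)) {x y : α} (hx : x ∈ S) (hy : y ∈ S) :
    f x - g x = f y - g y :=
  have := (Circle.isCoveringMap_exp 1).discreteTopology_fiber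
  hS.constant_of_mapsTo (isDiscrete_iff_discreteTopology.2 this) (hf.sub hg)
    (fun z hz ↦ by simp [Circle.exp_sub, hfg z hz]) hx hy

section Unicoherence

variable {α : Type*} [TopologicalSpace α]

theorem frontier_subset_inter_of_union_eq_univ {M N : Set α} (hM : IsClosed M) (hN : IsClosed N)
    (hMN : M ∪ N = univ) : frontier M ⊆ M ∩ N := by
  refine subset_inter hM.frontier_subset ?_
  rw [frontier_eq_closure_inter_closure]
  refine inter_subset_right.trans (hN.closure_subset_iff.2 fun x hx ↦ ?_)
  exact (hMN ▸ mem_univ x : x ∈ M ∪ N).resolve_left hx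

theorem exists_continuous_circleExp_eq_of_union_eq_univ [SimplyConnectedSpace α]
    [LocallyPathConnectedSpace α] {M N : Set α} (hM : IsClosed M) (hN : IsClosed N)
    (hMN : M ∪ N = univ) {f g : α → Circle} (hf : Continuous f) (hg : Continuous g)
    (hfg : EqOn f g (M ∩ N)) :
    ∃ θ : C(α, ℝ), (∀ x ∈ M, Circle.exp (θ x) = f x) ∧ ∀ x ∈ N, Circle.exp (θ x) = g x := by
  classical
  have hglue : Continuous (M.piecewise f g) :=
    hf.piecewise (fun x hx ↦ hfg (frontier_subset_inter_of_union_eq_univ hM hN hMN hx)) hg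
  obtain ⟨θ, hθ⟩ := Circle.exists_continuous_lift ⟨_, hglue⟩
  refine ⟨θ, fun x hx ↦ by simp [hθ, hx], fun x hx ↦ ?_⟩
  by_cases hxM : x ∈ M
  · simpa [hθ, hxM] using hfg ⟨hxM, hx⟩
  · simp [hθ, hxM]

theorem IsPreconnected.inter_of_isClosed_of_union_eq_univ [NormalSpace α] [SimplyConnectedSpace α]
    [LocallyPathConnectedSpace α] {M N : Set α} (hM : IsClosed M) (hN : IsClosed N)
    (hMc : IsPreconnected M) (hNc : IsPreconnected N) (hMN : M ∪ N = univ) :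
    IsPreconnected (M ∩ N) := by
  rw [isPreconnected_closed_iff]
  intro A B hA hB hAB ⟨a, haMN, haA⟩ ⟨b, hbMN, hbB⟩
  by_contra hAB_empty
  obtain ⟨φ, hφA, hφB, -⟩ := exists_continuous_zero_one_of_isClosed ((hM.inter hN).inter hA)
    ((hM.inter hN).inter hB) (disjoint_left.2 fun x hxA hxB ↦ hAB_empty ⟨x, hxA.1, hxA.2, hxB.2⟩)
  have hφ : Continuous fun x ↦ Real.pi * φ x := continuous_const.mul φ.continuous
  have hφ_MN : ∀ x ∈ M ∩ N,
      Circle.exp (Real.pi * φ x) = Circle.exp (-(Real.pi * φ x)) := by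
    intro x hx
    rcases hAB hx with hxA | hxB
    · simp [hφA ⟨hx, hxA⟩]
    · simpa [hφB ⟨hx, hxB⟩] using
        (Circle.exp_eq_exp.2 ⟨1, by push_cast; ring⟩ : Circle.exp Real.pi = Circle.exp (-Real.pi))
  obtain ⟨θ, hθM, hθN⟩ := exists_continuous_circleExp_eq_of_union_eq_univ hM hN hMN
    (Circle.exp.continuous.comp hφ) (Circle.exp.continuous.comp hφ.neg) hφ_MN
  have hM_const := hMc.sub_eq_sub_of_circleExp_eq θ.continuous.continuousOn hφ.continuousOn
    hθM haMN.1 hbMN.1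
  have hN_const := hNc.sub_eq_sub_of_circleExp_eq θ.continuous.continuousOn hφ.neg.continuousOn
    hθN haMN.2 hbMN.2
  simp only [hφA ⟨haMN, haA⟩, hφB ⟨hbMN, hbB⟩, Pi.zero_apply, Pi.one_apply, Pi.neg_apply]
    at hM_const hN_const
  linarith [Real.pi_pos]

end Unicoherence

section ComplementComponents

variable {α : Type*} [TopologicalSpace α]

theorem frontier_connectedComponentIn_compl_subset_closure [LocallyConnectedSpace α] (X : Set α)
    (y : α) : frontier (connectedComponentIn Xᶜ y) ⊆ closure X := by
  intro w hw
  by_contra hwX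
  set D := connectedComponentIn (closure X)ᶜ w
  have hDo : IsOpen D := isClosed_closure.isOpen_compl.connectedComponentIn
  have hwD : w ∈ D := mem_connectedComponentIn hwX
  have hDX : D ⊆ Xᶜ :=
    (connectedComponentIn_subset _ _).trans (compl_subset_compl.2 subset_closure)
  obtain ⟨z, hzD, hzC⟩ := mem_closure_iff.1 hw.1 D hDo hwD
  have hDC : D ⊆ connectedComponentIn Xᶜ y :=
    connectedComponentIn_eq hzC ▸ isPreconnected_connectedComponentIn.subset_connectedComponentIn
      hzD hDX
  exact hw.2 (interior_maximal hDC hDo hwD)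

theorem frontier_connectedComponentIn_nonempty [PreconnectedSpace α] {F : Set α} (hF : F ≠ univ)
    {y : α} (hy : y ∈ F) : (frontier (connectedComponentIn F y)).Nonempty :=
  nonempty_frontier_iff.2 ⟨⟨y, mem_connectedComponentIn hy⟩,
    fun h ↦ hF (eq_univ_of_univ_subset (h ▸ connectedComponentIn_subset F y))⟩

theorem connectedComponentIn_subset_compl_connectedComponentIn {F : Set α} {y z : α}
    (hz : z ∉ connectedComponentIn F y) : connectedComponentIn F z ⊆ (connectedComponentIn F y)ᶜ :=
  fun w hwz hwy ↦ hz <| by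
    rw [connectedComponentIn_eq hwy, ← connectedComponentIn_eq hwz]
    exact mem_connectedComponentIn (connectedComponentIn_nonempty_iff.1 ⟨w, hwz⟩)

variable [LocallyConnectedSpace α] [PreconnectedSpace α] {X : Set α}

theorem IsConnected.isPreconnected_closure_union_closure_connectedComponentIn
    (hX : IsConnected X) (z : α) :
    IsPreconnected (closure X ∪ closure (connectedComponentIn Xᶜ z)) := by
  by_cases hzX : z ∈ X
  · simpa [connectedComponentIn_eq_empty (notMem_compl_iff.2 hzX)] using hX.isPreconnected.closure
  · obtain ⟨w, hw⟩ := frontier_connectedComponentIn_nonempty (compl_ne_univ.2 hX.nonempty) hzX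
    exact IsPreconnected.union w (frontier_connectedComponentIn_compl_subset_closure X z hw) hw.1
      hX.isPreconnected.closure isPreconnected_connectedComponentIn.closure

theorem IsConnected.isPreconnected_closure_compl_connectedComponentIn (hX : IsConnected X)
    (y : α) : IsPreconnected (closure (connectedComponentIn Xᶜ y)ᶜ) := by
  set C := connectedComponentIn Xᶜ y
  obtain ⟨x, hx⟩ := hX.nonempty
  have hU : IsPreconnected (⋃ z : ↥Cᶜ, closure X ∪ closure (connectedComponentIn Xᶜ z)) :=
    isPreconnected_iUnion ⟨x, mem_iInter.2 fun _ ↦ Or.inl (subset_closure hx)⟩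
      fun z ↦ hX.isPreconnected_closure_union_closure_connectedComponentIn z
  refine hU.subset_closure (iUnion_subset fun z ↦ union_subset ?_ ?_) (closure_mono fun z hz ↦ ?_)
  · exact closure_mono fun w hwX hwC ↦ connectedComponentIn_subset _ _ hwC hwX
  · exact closure_mono (connectedComponentIn_subset_compl_connectedComponentIn z.2)
  · refine mem_iUnion.2 ⟨⟨z, hz⟩, ?_⟩
    by_cases hzX : z ∈ X
    · exact Or.inl (subset_closure hzX)
    · exact Or.inr (subset_closure (mem_connectedComponentIn hzX))

end ComplementComponents

/-- Newman's theorem: if `X` is a connected subset of `ℝⁿ`, then every connected component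
of `ℝⁿ \ X` has a connected boundary. -/
theorem component_of_complement_frontier_connected
    (n : ℕ) (X : Set (Fin n → ℝ))
    (hconn : IsConnected X) :
    ∀ y ∈ Xᶜ, IsConnected (frontier (connectedComponentIn Xᶜ y)) := by
  intro y hy
  set C := connectedComponentIn Xᶜ y
  have hcover : closure C ∪ closure Cᶜ = univ :=
    univ_subset_iff.1 (union_compl_self C ▸ union_subset_union subset_closure subset_closure)
  refine ⟨frontier_connectedComponentIn_nonempty (compl_ne_univ.2 hconn.nonempty) hy, ?_⟩
  rw [frontier_eq_closure_inter_closure]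
  exact .inter_of_isClosed_of_union_eq_univ isClosed_closure isClosed_closure
    isPreconnected_connectedComponentIn.closure
    (hconn.isPreconnected_closure_compl_connectedComponentIn y) hcover
end

section
/- Let F and G be disjoint closed subsets of ℝ² such that ℝ² \ F and ℝ² \ G are connected. Then ℝ² \ (F ∪ G) is connected. -/
/-!
Suppose `(F ∪ G)ᶜ` falls apart, and let `B` be one of the pieces, so that
`frontier B ⊆ F ∪ G`. Take a continuous angle `θ` equal to `0` on `F` and to `π` on `G`. The
circle-valued map equal to `exp (-iθ)` on `B` and to `exp (iθ)` off `B` is continuous, because the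
two formulas agree on `F ∪ G`; since the plane is simply connected, it has a continuous real
logarithm `t`. On `Gᶜ` the function equal to `t + θ` on `B` and to `t - θ` off `B` is continuous
with values in `2πℤ`, hence constant on the connected set `Gᶜ`; on `Fᶜ` the same holds for
`t + θ - 2π` on `B` and `t - θ` off `B`. Comparing both at a point of `B` and at a point of
`(F ∪ G)ᶜ` outside `B` gives `2π = 0`.
-/

open Set Real

section

variable {X : Type*} [TopologicalSpace X]

theorem exists_circleExp_lift [SimplyConnectedSpace X] [LocallyPathConnectedSpace X]
    (f : C(X, Circle)) : ∃ t : C(X, ℝ), ∀ x, Circle.exp (t x) = f x := by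
  obtain ⟨x₀⟩ : Nonempty X := inferInstance
  obtain ⟨t, -, ht⟩ := (Circle.isCoveringMap_exp.existsUnique_continuousMap_lifts f x₀
    (Complex.arg (f x₀)) (Circle.exp_arg _)).exists
  exact ⟨t, congrFun ht⟩

theorem IsPreconnected.sub_eq_sub_of_circleExp_eq_s2 {S : Set X} (hS : IsPreconnected S)
    {u v : X → ℝ} (hu : ContinuousOn u S) (hv : ContinuousOn v S)
    (huv : ∀ x ∈ S, Circle.exp (u x) = Circle.exp (v x)) {a b : X} (ha : a ∈ S) (hb : b ∈ S) :
    u a - v a = u b - v b := by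
  refine hS.constant_of_mapsTo (T := AddSubgroup.zmultiples (2 * π))
    (isDiscrete_iff_discreteTopology.2 <|
      inferInstanceAs (DiscreteTopology (AddSubgroup.zmultiples (2 * π))))
    (hu.sub hv) ?_ ha hb
  intro x hx
  obtain ⟨m, hm⟩ := Circle.exp_eq_exp.1 (huv x hx)
  exact ⟨m, by simp [hm]⟩

theorem frontier_inter_subset_compl {W u v : Set X} (hW : IsOpen W) (hu : IsOpen u)
    (hv : IsOpen v) (hWuv : W ⊆ u ∪ v) (hdisj : W ∩ (u ∩ v) = ∅) :
    frontier (W ∩ u) ⊆ Wᶜ := by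
  rintro x ⟨hxcl, hxint⟩ hxW
  rcases hWuv hxW with hxu | hxv
  · exact hxint ((hW.inter hu).interior_eq.symm ▸ ⟨hxW, hxu⟩)
  · obtain ⟨y, hyv, hyW, hyu⟩ := mem_closure_iff.1 hxcl v hv hxv
    exact (eq_empty_iff_forall_notMem.1 hdisj) y ⟨hyW, hyu, hyv⟩

theorem mem_of_mem_of_frontier_subset_union [SimplyConnectedSpace X]
    [LocallyPathConnectedSpace X] {F G B : Set X} {θ : X → ℝ} (hθ : Continuous θ)
    (hθF : EqOn θ 0 F) (hθG : EqOn θ (fun _ => π) G) (hFc : IsPreconnected Fᶜ)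
    (hGc : IsPreconnected Gᶜ) (hB : frontier B ⊆ F ∪ G) {a b : X} (ha : a ∉ F ∪ G)
    (hb : b ∉ F ∪ G) (hbB : b ∈ B) : a ∈ B := by
  classical
  by_contra haB
  set s : X → ℝ := B.piecewise (fun x => -θ x) θ
  set s' : X → ℝ := B.piecewise (fun x => 2 * π - θ x) θ
  have hs : ContinuousOn s Gᶜ := by
    refine ContinuousOn.piecewise (fun x ⟨hxG, hxB⟩ => ?_) hθ.neg.continuousOn hθ.continuousOn
    rw [hθF ((hB hxB).resolve_right hxG), Pi.zero_apply, neg_zero]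
  have hs' : ContinuousOn s' Fᶜ := by
    refine ContinuousOn.piecewise (fun x ⟨hxF, hxB⟩ => ?_) (continuous_const.sub hθ).continuousOn
      hθ.continuousOn
    rw [hθG ((hB hxB).resolve_left hxF)]
    ring
  have hexp_s : Continuous fun x => Circle.exp (s x) := by
    rw [← piecewise_op (h := fun _ => Circle.exp)]
    refine Continuous.piecewise (fun x hx => ?_) (by fun_prop) (by fun_prop)
    rcases hB hx with hxF | hxG
    · simp [hθF hxF]
    · exact Circle.exp_eq_exp.2 ⟨-1, by rw [hθG hxG]; ring⟩
  have hexp_s' : ∀ x, Circle.exp (s' x) = Circle.exp (s x) := by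
    intro x
    by_cases hx : x ∈ B
    · simp only [s, s', piecewise_eq_of_mem _ _ _ hx]
      exact Circle.exp_eq_exp.2 ⟨1, by ring⟩
    · simp only [s, s', piecewise_eq_of_notMem _ _ _ hx]
  obtain ⟨t, ht⟩ := exists_circleExp_lift ⟨_, hexp_s⟩
  have hG_eq := hGc.sub_eq_sub_of_circleExp_eq_s2 t.continuous.continuousOn hs
    (fun x _ => ht x) (fun h => ha (Or.inr h)) (fun h => hb (Or.inr h))
  have hF_eq := hFc.sub_eq_sub_of_circleExp_eq_s2 t.continuous.continuousOn hs'
    (fun x _ => (ht x).trans (hexp_s' x).symm) (fun h => ha (Or.inl h)) (fun h => hb (Or.inl h))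
  simp only [s, s', piecewise_eq_of_mem _ _ _ hbB, piecewise_eq_of_notMem _ _ _ haB]
    at hG_eq hF_eq
  linarith [pi_pos]

theorem mem_iff_mem_of_frontier_subset_union [NormalSpace X] [SimplyConnectedSpace X]
    [LocallyPathConnectedSpace X] {F G B : Set X} (hF : IsClosed F) (hG : IsClosed G)
    (hFG : Disjoint F G) (hFc : IsPreconnected Fᶜ) (hGc : IsPreconnected Gᶜ)
    (hB : frontier B ⊆ F ∪ G) {a b : X} (ha : a ∉ F ∪ G) (hb : b ∉ F ∪ G) :
    a ∈ B ↔ b ∈ B := by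
  obtain ⟨σ, hσF, hσG, -⟩ := exists_continuous_zero_one_of_isClosed hF hG hFG
  have hθ : Continuous fun x => π * σ x := continuous_const.mul σ.continuous
  have hθF : EqOn (fun x => π * σ x) 0 F := fun x hx => by simp [hσF hx]
  have hθG : EqOn (fun x => π * σ x) (fun _ => π) G := fun x hx => by simp [hσG hx]
  exact ⟨mem_of_mem_of_frontier_subset_union hθ hθF hθG hFc hGc hB hb ha,
    mem_of_mem_of_frontier_subset_union hθ hθF hθG hFc hGc hB ha hb⟩

theorem isPreconnected_compl_union [NormalSpace X] [SimplyConnectedSpace X]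
    [LocallyPathConnectedSpace X] {F G : Set X} (hF : IsClosed F) (hG : IsClosed G)
    (hFG : Disjoint F G) (hFc : IsPreconnected Fᶜ) (hGc : IsPreconnected Gᶜ) :
    IsPreconnected (F ∪ G)ᶜ := by
  refine isPreconnected_iff_subset_of_disjoint.2 fun u v hu hv hWuv hdisj => ?_
  rw [or_iff_not_imp_left, not_subset]
  rintro ⟨a, ha, hau⟩ b hb
  refine (hWuv hb).resolve_left fun hbu => hau ?_
  have hfr : frontier ((F ∪ G)ᶜ ∩ u) ⊆ F ∪ G := by
    simpa only [compl_compl] using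
      frontier_inter_subset_compl (hF.union hG).isOpen_compl hu hv hWuv hdisj
  exact ((mem_iff_mem_of_frontier_subset_union hF hG hFG hFc hGc hfr ha hb).2 ⟨hb, hbu⟩).2

theorem nonempty_compl_union [PreconnectedSpace X] {F G : Set X} (hF : IsClosed F)
    (hG : IsClosed G) (hFG : Disjoint F G) (hFc : Fᶜ.Nonempty) (hGc : Gᶜ.Nonempty) :
    (F ∪ G)ᶜ.Nonempty := by
  rw [nonempty_compl]
  intro hcover
  have hFG' : Fᶜ = G := (IsCompl.of_eq (disjoint_iff.1 hFG) hcover).compl_eq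
  rcases isClopen_iff.1 ⟨hF, isClosed_compl_iff.1 (hFG' ▸ hG)⟩ with rfl | rfl
  · simp [← hFG'] at hGc
  · simp at hFc

theorem isConnected_compl_union [NormalSpace X] [SimplyConnectedSpace X]
    [LocallyPathConnectedSpace X] {F G : Set X} (hF : IsClosed F) (hG : IsClosed G)
    (hFG : Disjoint F G) (hFc : IsConnected Fᶜ) (hGc : IsConnected Gᶜ) :
    IsConnected (F ∪ G)ᶜ :=
  ⟨nonempty_compl_union hF hG hFG hFc.nonempty hGc.nonempty,
    isPreconnected_compl_union hF hG hFG hFc.isPreconnected hGc.isPreconnected⟩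

end

/-- If `F` and `G` are disjoint closed subsets of `ℝ²` with connected complements,
then the complement of `F ∪ G` is connected. -/
theorem complement_union_connected
    (F G : Set (Fin 2 → ℝ))
    (hF : IsClosed F) (hG : IsClosed G)
    (hdisj : F ∩ G = ∅)
    (hFc : IsConnected Fᶜ) (hGc : IsConnected Gᶜ) :
    IsConnected (F ∪ G)ᶜ :=
  isConnected_compl_union hF hG (disjoint_iff_inter_eq_empty.2 hdisj) hFc hGc
end

section
/- There do not exist three nonempty regular closed subsets r₁, r₂, r₃ of ℝ with pairwise disjoint interiors such that each rᵢ has connected interior and each union rᵢ ∪ rⱼ (i ≠ j) has connected interior. -/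
/-!
Pick a point `xᵢ` in each interior. Of three reals one lies between the other two, say `x₁`
between `x₀` and `x₂`. The interior of `r₀ ∪ r₂` is connected, hence order-connected, so it
contains `x₁`; thus `x₁ ∈ r₀ ∪ r₂ = closure (interior r₀) ∪ closure (interior r₂)`. But `x₁`
lies in the open set `interior r₁`, which misses both interiors and therefore their closures.
-/

open Set

lemma mem_uIcc_or_mem_uIcc_or_mem_uIcc {α : Type*} [LinearOrder α] (a b c : α) :
    b ∈ uIcc a c ∨ a ∈ uIcc b c ∨ c ∈ uIcc a b := by
  simp only [mem_uIcc]
  rcases le_total a b with hab | hba <;> rcases le_total b c with hbc | hcb <;>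
    rcases le_total a c with hac | hca <;> tauto

lemma disjoint_interior_union_of_eq_closure_interior {X : Type*} [TopologicalSpace X]
    {s t u : Set X} (hs : s = closure (interior s)) (ht : t = closure (interior t))
    (hus : Disjoint (interior u) (interior s)) (hut : Disjoint (interior u) (interior t)) :
    Disjoint (interior u) (s ∪ t) := by
  rw [hs, ht]
  exact disjoint_union_right.2
    ⟨hus.closure_right isOpen_interior, hut.closure_right isOpen_interior⟩

lemma notMem_uIcc_of_isPreconnected_interior_union {α : Type*} [LinearOrder α]
    [TopologicalSpace α] [OrderClosedTopology α] {s t u : Set α}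
    (hs : s = closure (interior s)) (ht : t = closure (interior t))
    (hus : Disjoint (interior u) (interior s)) (hut : Disjoint (interior u) (interior t))
    (hst : IsPreconnected (interior (s ∪ t)))
    {a b c : α} (ha : a ∈ interior s) (hb : b ∈ interior u) (hc : c ∈ interior t) :
    b ∉ uIcc a c := fun hbac => by
  have hb_union : b ∈ interior (s ∪ t) :=
    hst.ordConnected.uIcc_subset (interior_mono subset_union_left ha)
      (interior_mono subset_union_right hc) hbac
  exact disjoint_left.1 (disjoint_interior_union_of_eq_closure_interior hs ht hus hut) hb
    (interior_subset hb_union)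

/-- There do not exist three nonempty regular closed subsets of `ℝ` with pairwise disjoint
interiors, each with connected interior, such that every pairwise union has connected
interior. -/
theorem no_three_interior_connected_contact_in_line :
    ¬ ∃ r : Fin 3 → Set ℝ,
      (∀ i, r i = closure (interior (r i))) ∧
      (∀ i, (r i).Nonempty) ∧
      (∀ i j, i ≠ j → interior (r i) ∩ interior (r j) = ∅) ∧
      (∀ i, IsConnected (interior (r i))) ∧
      (∀ i j, i ≠ j → IsConnected (interior (r i ∪ r j))) := by
  rintro ⟨r, hreg, -, hdisj, hconn, hunion⟩
  choose x hx using fun i => (hconn i).nonempty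
  have hmiddle : ∀ i j k, i ≠ j → j ≠ k → i ≠ k → x j ∉ uIcc (x i) (x k) :=
    fun i j k hij hjk hik =>
      notMem_uIcc_of_isPreconnected_interior_union (hreg i) (hreg k)
        (disjoint_iff_inter_eq_empty.2 (hdisj j i hij.symm))
        (disjoint_iff_inter_eq_empty.2 (hdisj j k hjk)) (hunion i k hik).isPreconnected
        (hx i) (hx j) (hx k)
  rcases mem_uIcc_or_mem_uIcc_or_mem_uIcc (x 0) (x 1) (x 2) with h | h | h
  · exact hmiddle 0 1 2 (by decide) (by decide) (by decide) h
  · exact hmiddle 1 0 2 (by decide) (by decide) (by decide) h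
  · exact hmiddle 0 2 1 (by decide) (by decide) (by decide) h
end

section
/- For every n ≥ 2 there exist three regular closed subsets r₁, r₂, r₃ of ℝⁿ, each nonempty with connected interior and pairwise disjoint interiors, such that each union rᵢ ∪ rⱼ for i ≠ j has connected interior. -/
/-!
In the plane take the closed left half-plane and the two closed right quadrants. Each pairwise
union contains an open half-plane `V` meeting both open pieces, so the interior of the union lies
between the connected open set `interior s ∪ V ∪ interior t` and its closure, hence is connected.
All the properties survive taking the product with the connected space `ℝⁿ⁻²`.
-/

open Set

structure IsInteriorConnectedContact {X ι : Type*} [TopologicalSpace X] (r : ι → Set X) :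
    Prop where
  eq_closure_interior : ∀ i, r i = closure (interior (r i))
  nonempty : ∀ i, (r i).Nonempty
  isConnected_interior : ∀ i, IsConnected (interior (r i))
  interior_inter_interior : ∀ i j, i ≠ j → interior (r i) ∩ interior (r j) = ∅
  isConnected_interior_union : ∀ i j, i ≠ j → IsConnected (interior (r i ∪ r j))

section

variable {X Y : Type*} [TopologicalSpace X] [TopologicalSpace Y]

theorem isConnected_interior_union_of_bridge {s t V : Set X}
    (hs : s = closure (interior s)) (ht : t = closure (interior t))
    (hs' : IsPreconnected (interior s)) (ht' : IsPreconnected (interior t))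
    (hV : IsPreconnected V) (hVst : V ⊆ interior (s ∪ t))
    (hVs : (V ∩ interior s).Nonempty) (hVt : (V ∩ interior t).Nonempty) :
    IsConnected (interior (s ∪ t)) := by
  set U := interior s ∪ V ∪ interior t
  have hU : IsPreconnected U :=
    (hs'.union' (inter_comm V _ ▸ hVs) hV).union'
      (hVt.mono (inter_subset_inter_left _ subset_union_right)) ht'
  have hU_sub : U ⊆ interior (s ∪ t) :=
    union_subset (union_subset (interior_mono subset_union_left) hVst)
      (interior_mono subset_union_right)
  have hsub_closure : interior (s ∪ t) ⊆ closure U := by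
    refine interior_subset.trans (union_subset ?_ ?_)
    · exact hs.trans_subset (closure_mono (subset_union_left.trans subset_union_left))
    · exact ht.trans_subset (closure_mono subset_union_right)
  obtain ⟨x, hxV, -⟩ := hVs
  exact ⟨⟨x, hVst hxV⟩, hU.subset_closure hU_sub hsub_closure⟩

theorem prod_eq_closure_interior {s : Set X} {t : Set Y}
    (hs : s = closure (interior s)) (ht : t = closure (interior t)) :
    s ×ˢ t = closure (interior (s ×ˢ t)) := by
  rw [interior_prod_eq, closure_prod_eq, ← hs, ← ht]

end

section

variable {α : Type*} [TopologicalSpace α] [LinearOrder α] [OrderTopology α] [DenselyOrdered α]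
  [NoMinOrder α] [NoMaxOrder α]

theorem Iic_eq_closure_interior (a : α) : Iic a = closure (interior (Iic a)) := by
  rw [interior_Iic, closure_Iio]

theorem Ici_eq_closure_interior (a : α) : Ici a = closure (interior (Ici a)) := by
  rw [interior_Ici, closure_Ioi]

end

namespace IsInteriorConnectedContact

variable {X ι : Type*} [TopologicalSpace X] {r : ι → Set X}

theorem preimage_homeomorph (h : IsInteriorConnectedContact r) {Y : Type*} [TopologicalSpace Y]
    (e : Y ≃ₜ X) :
    IsInteriorConnectedContact fun i ↦ e ⁻¹' r i where
  eq_closure_interior i := by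
    rw [← e.preimage_interior, ← e.preimage_closure, ← h.eq_closure_interior i]
  nonempty i := (h.nonempty i).preimage e.surjective
  isConnected_interior i := by
    rw [← e.preimage_interior]
    exact e.isConnected_preimage.2 (h.isConnected_interior i)
  interior_inter_interior i j hij := by
    rw [← e.preimage_interior, ← e.preimage_interior, ← preimage_inter,
      h.interior_inter_interior i j hij, preimage_empty]
  isConnected_interior_union i j hij := by
    rw [← preimage_union, ← e.preimage_interior]
    exact e.isConnected_preimage.2 (h.isConnected_interior_union i j hij)

theorem prod_univ (h : IsInteriorConnectedContact r) (Y : Type*) [TopologicalSpace Y]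
    [ConnectedSpace Y] : IsInteriorConnectedContact fun i ↦ r i ×ˢ (univ : Set Y) where
  eq_closure_interior i :=
    prod_eq_closure_interior (h.eq_closure_interior i) (by simp)
  nonempty i := (h.nonempty i).prod univ_nonempty
  isConnected_interior i := by
    rw [interior_prod_eq, interior_univ]
    exact (h.isConnected_interior i).prod isConnected_univ
  interior_inter_interior i j hij := by
    rw [interior_prod_eq, interior_prod_eq, prod_inter_prod, h.interior_inter_interior i j hij,
      empty_prod]
  isConnected_interior_union i j hij := by
    rw [← union_prod, interior_prod_eq, interior_univ]
    exact (h.isConnected_interior_union i j hij).prod isConnected_univ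

end IsInteriorConnectedContact

theorem Fin.forall_ne_of_symm {P : Fin 3 → Fin 3 → Prop} (symm : ∀ i j, P i j → P j i)
    (h01 : P 0 1) (h02 : P 0 2) (h12 : P 1 2) : ∀ i j, i ≠ j → P i j := by
  intro i j hij
  fin_cases i <;> fin_cases j
  all_goals first | exact absurd rfl hij | assumption | exact symm _ _ ‹_›

def leftHalfPlane : Set (ℝ × ℝ) := Iic 0 ×ˢ univ

def lowerRightQuadrant : Set (ℝ × ℝ) := Ici 0 ×ˢ Iic 0

def upperRightQuadrant : Set (ℝ × ℝ) := Ici 0 ×ˢ Ici 0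

theorem interior_leftHalfPlane : interior leftHalfPlane = Iio 0 ×ˢ univ := by
  rw [leftHalfPlane, interior_prod_eq, interior_Iic, interior_univ]

theorem interior_lowerRightQuadrant : interior lowerRightQuadrant = Ioi 0 ×ˢ Iio 0 := by
  rw [lowerRightQuadrant, interior_prod_eq, interior_Iic, interior_Ici]

theorem interior_upperRightQuadrant : interior upperRightQuadrant = Ioi 0 ×ˢ Ioi 0 := by
  rw [upperRightQuadrant, interior_prod_eq, interior_Ici]

theorem leftHalfPlane_eq_closure_interior :
    leftHalfPlane = closure (interior leftHalfPlane) :=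
  prod_eq_closure_interior (Iic_eq_closure_interior 0) (by simp)

theorem lowerRightQuadrant_eq_closure_interior :
    lowerRightQuadrant = closure (interior lowerRightQuadrant) :=
  prod_eq_closure_interior (Ici_eq_closure_interior 0) (Iic_eq_closure_interior 0)

theorem upperRightQuadrant_eq_closure_interior :
    upperRightQuadrant = closure (interior upperRightQuadrant) :=
  prod_eq_closure_interior (Ici_eq_closure_interior 0) (Ici_eq_closure_interior 0)

theorem isConnected_interior_leftHalfPlane : IsConnected (interior leftHalfPlane) :=
  interior_leftHalfPlane ▸ isConnected_Iio.prod isConnected_univ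

theorem isConnected_interior_lowerRightQuadrant : IsConnected (interior lowerRightQuadrant) :=
  interior_lowerRightQuadrant ▸ isConnected_Ioi.prod isConnected_Iio

theorem isConnected_interior_upperRightQuadrant : IsConnected (interior upperRightQuadrant) :=
  interior_upperRightQuadrant ▸ isConnected_Ioi.prod isConnected_Ioi

theorem isConnected_interior_leftHalfPlane_union_lowerRightQuadrant :
    IsConnected (interior (leftHalfPlane ∪ lowerRightQuadrant)) := by
  refine isConnected_interior_union_of_bridge (V := univ ×ˢ Iio 0)
    leftHalfPlane_eq_closure_interior lowerRightQuadrant_eq_closure_interior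
    isConnected_interior_leftHalfPlane.2 isConnected_interior_lowerRightQuadrant.2
    (isConnected_univ.prod isConnected_Iio).2
    (interior_maximal ?_ (isOpen_univ.prod isOpen_Iio)) ⟨(-1, -1), ?_⟩ ⟨(1, -1), ?_⟩
  · rintro ⟨x, y⟩ ⟨-, hy⟩
    rcases le_total x 0 with hx | hx
    exacts [Or.inl ⟨hx, trivial⟩, Or.inr ⟨hx, Iio_subset_Iic_self hy⟩]
  all_goals
    simp only [interior_leftHalfPlane, interior_lowerRightQuadrant, mem_inter_iff, mem_prod,
      mem_univ, mem_Iio, mem_Ioi]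
    norm_num

theorem isConnected_interior_leftHalfPlane_union_upperRightQuadrant :
    IsConnected (interior (leftHalfPlane ∪ upperRightQuadrant)) := by
  refine isConnected_interior_union_of_bridge (V := univ ×ˢ Ioi 0)
    leftHalfPlane_eq_closure_interior upperRightQuadrant_eq_closure_interior
    isConnected_interior_leftHalfPlane.2 isConnected_interior_upperRightQuadrant.2
    (isConnected_univ.prod isConnected_Ioi).2
    (interior_maximal ?_ (isOpen_univ.prod isOpen_Ioi)) ⟨(-1, 1), ?_⟩ ⟨(1, 1), ?_⟩
  · rintro ⟨x, y⟩ ⟨-, hy⟩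
    rcases le_total x 0 with hx | hx
    exacts [Or.inl ⟨hx, trivial⟩, Or.inr ⟨hx, Ioi_subset_Ici_self hy⟩]
  all_goals
    simp only [interior_leftHalfPlane, interior_upperRightQuadrant, mem_inter_iff, mem_prod,
      mem_univ, mem_Iio, mem_Ioi]
    norm_num

theorem isConnected_interior_lowerRightQuadrant_union_upperRightQuadrant :
    IsConnected (interior (lowerRightQuadrant ∪ upperRightQuadrant)) := by
  refine isConnected_interior_union_of_bridge (V := Ioi 0 ×ˢ univ)
    lowerRightQuadrant_eq_closure_interior upperRightQuadrant_eq_closure_interior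
    isConnected_interior_lowerRightQuadrant.2 isConnected_interior_upperRightQuadrant.2
    (isConnected_Ioi.prod isConnected_univ).2
    (interior_maximal ?_ (isOpen_Ioi.prod isOpen_univ)) ⟨(1, -1), ?_⟩ ⟨(1, 1), ?_⟩
  · rintro ⟨x, y⟩ ⟨hx, -⟩
    rcases le_total y 0 with hy | hy
    exacts [Or.inl ⟨Ioi_subset_Ici_self hx, hy⟩, Or.inr ⟨Ioi_subset_Ici_self hx, hy⟩]
  all_goals
    simp only [interior_lowerRightQuadrant, interior_upperRightQuadrant, mem_inter_iff, mem_prod,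
      mem_univ, mem_Iio, mem_Ioi]
    norm_num

theorem isInteriorConnectedContact_plane :
    IsInteriorConnectedContact ![leftHalfPlane, lowerRightQuadrant, upperRightQuadrant] := by
  have hLD : interior leftHalfPlane ∩ interior lowerRightQuadrant = ∅ := by
    rw [interior_leftHalfPlane, interior_lowerRightQuadrant, prod_inter_prod, Iio_inter_Ioi,
      Ioo_self, empty_prod]
  have hLU : interior leftHalfPlane ∩ interior upperRightQuadrant = ∅ := by
    rw [interior_leftHalfPlane, interior_upperRightQuadrant, prod_inter_prod, Iio_inter_Ioi,
      Ioo_self, empty_prod]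
  have hDU : interior lowerRightQuadrant ∩ interior upperRightQuadrant = ∅ := by
    rw [interior_lowerRightQuadrant, interior_upperRightQuadrant, prod_inter_prod, Iio_inter_Ioi,
      Ioo_self, prod_empty]
  refine ⟨?_, ?_, ?_, ?_, ?_⟩
  · intro i; fin_cases i
    exacts [leftHalfPlane_eq_closure_interior, lowerRightQuadrant_eq_closure_interior,
      upperRightQuadrant_eq_closure_interior]
  · intro i; fin_cases i
    exacts [isConnected_interior_leftHalfPlane.1.mono interior_subset,
      isConnected_interior_lowerRightQuadrant.1.mono interior_subset,
      isConnected_interior_upperRightQuadrant.1.mono interior_subset]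
  · intro i; fin_cases i
    exacts [isConnected_interior_leftHalfPlane, isConnected_interior_lowerRightQuadrant,
      isConnected_interior_upperRightQuadrant]
  · exact Fin.forall_ne_of_symm (fun _ _ h ↦ by rwa [inter_comm]) hLD hLU hDU
  · exact Fin.forall_ne_of_symm (fun _ _ h ↦ by rwa [union_comm])
      isConnected_interior_leftHalfPlane_union_lowerRightQuadrant
      isConnected_interior_leftHalfPlane_union_upperRightQuadrant
      isConnected_interior_lowerRightQuadrant_union_upperRightQuadrant

/-- For every `n ≥ 2` there exist three nonempty regular closed subsets of `ℝⁿ` with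
pairwise disjoint connected interiors such that each pairwise union has connected
interior. -/
theorem three_interior_connected_contact (n : ℕ) (hn : 2 ≤ n) :
    ∃ r : Fin 3 → Set (Fin n → ℝ),
      (∀ i, r i = closure (interior (r i))) ∧
      (∀ i, (r i).Nonempty) ∧
      (∀ i, IsConnected (interior (r i))) ∧
      (∀ i j, i ≠ j → interior (r i) ∩ interior (r j) = ∅) ∧
      (∀ i j, i ≠ j → IsConnected (interior (r i ∪ r j))) := by
  obtain ⟨m, rfl⟩ := Nat.exists_eq_add_of_le hn
  let e : (Fin (2 + m) → ℝ) ≃ₜ (ℝ × ℝ) × (Fin m → ℝ) :=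
    (Homeomorph.piCongrLeft finSumFinEquiv).symm.trans <|
      Homeomorph.sumArrowHomeomorphProdArrow.trans <|
        Homeomorph.finTwoArrow.prodCongr (Homeomorph.refl _)
  have h := (isInteriorConnectedContact_plane.prod_univ (Fin m → ℝ)).preimage_homeomorph e
  exact ⟨_, h.eq_closure_interior, h.nonempty, h.isConnected_interior,
    h.interior_inter_interior, h.isConnected_interior_union⟩
end

section
/- In a 2-quasi-saw (W,R) with the Aleksandrov topology, a regular closed subset X ⊆ W is connected if and only if its interior is connected. -/
/-- The Aleksandrov topology of a relation `R`: open sets are the `R`-upward closed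
sets. -/
def aleksandrov (W : Type*) (R : W → W → Prop) : TopologicalSpace W where
  IsOpen X := ∀ x ∈ X, ∀ y, R x y → y ∈ X
  isOpen_univ := fun _ _ _ _ => trivial
  isOpen_inter := fun s t hs ht x hx y hxy =>
    ⟨hs x hx.1 y hxy, ht x hx.2 y hxy⟩
  isOpen_sUnion := fun S hS x hx y hxy => by
    rcases hx with ⟨s, hsS, hxs⟩
    exact ⟨s, hsS, hS s hsS x hxs y hxy⟩

/-- `x` has depth 0 in `(W, R)`: it has no proper `R`-successor. -/
def depthZero {W : Type*} (R : W → W → Prop) (x : W) : Prop := ∀ y, R x y → y = x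

/-! In the upper-set topology of a preorder the closure of a set is its down-closure and a point
lies in the interior of a set iff all its successors do. The closure of a connected set is
connected, so only the interior `U` of a connected regular closed set `X` needs work. Split `U`
into disjoint open sets `P` and `Q`. A point of `closure P ∩ closure Q` has a proper successor in
`P` and one in `Q`; having no third one, all its successors lie in `closure U = X`, so it lies in
`interior X = P ∪ Q`, which is impossible since the open set `P` misses `closure Q`
and vice versa.
Hence `X = closure P ∪ closure Q` is a disjoint union of closed sets, and connectedness of `X`
forces `P` or `Q` to be empty. -/

open Set Topology

section Preconnected

variable {X : Type*} [TopologicalSpace X]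

theorem IsOpen.isPreconnected_of_isPreconnected_closure {U : Set X} (hU : IsOpen U)
    (hc : IsPreconnected (closure U))
    (hsep : ∀ P Q, IsOpen P → IsOpen Q → Disjoint P Q → P ∪ Q = U →
      Disjoint (closure P) (closure Q)) :
    IsPreconnected U := by
  rw [isPreconnected_iff_subset_of_disjoint]
  intro u v hu hv hUuv huv
  have hPo : IsOpen (U ∩ u) := hU.inter hu
  have hQo : IsOpen (U ∩ v) := hU.inter hv
  have hPQ : Disjoint (U ∩ u) (U ∩ v) :=
    Set.disjoint_left.2 fun x ⟨hxU, hxu⟩ ⟨_, hxv⟩ => huv.subset ⟨hxU, hxu, hxv⟩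
  have hunion : U ∩ u ∪ U ∩ v = U := by
    rw [← inter_union_distrib_left, inter_eq_left.2 hUuv]
  have hcl := hsep _ _ hPo hQo hPQ hunion
  rw [← hunion, closure_union] at hc
  rcases isPreconnected_iff_subset_of_disjoint_closed.1 hc _ _ isClosed_closure isClosed_closure
    subset_rfl (by rw [hcl.inter_eq, inter_empty]) with h | h
  · refine .inl fun x hx => (hUuv hx).resolve_right fun hxv => ?_
    exact (hPQ.symm.closure_right hQo).notMem_of_mem_left ⟨hx, hxv⟩
      (h (by rw [← closure_union, hunion]; exact subset_closure hx))
  · refine .inr fun x hx => (hUuv hx).resolve_left fun hxu => ?_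
    exact (hPQ.closure_right hPo).notMem_of_mem_left ⟨hx, hxu⟩
      (h (by rw [← closure_union, hunion]; exact subset_closure hx))

end Preconnected

def AtMostTwoProperSuccessors (α : Type*) [Preorder α] : Prop :=
  ∀ x y z w : α, x ≤ y → x ≤ z → x ≤ w → y ≠ x → z ≠ x → w ≠ x →
    y = z ∨ y = w ∨ z = w

theorem aleksandrov_le_eq_upperSet (α : Type*) [Preorder α] :
    aleksandrov α (· ≤ ·) = upperSet α :=
  TopologicalSpace.ext <| funext fun _ =>
    propext ⟨fun h _ _ hab ha => h _ ha _ hab, fun h _ ha _ hab => h hab ha⟩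

namespace Topology.IsUpperSet

variable {α : Type*} [Preorder α] [TopologicalSpace α] [Topology.IsUpperSet α]

theorem mem_interior_iff {s : Set α} {a : α} : a ∈ interior s ↔ Ici a ⊆ s := by
  rw [mem_interior_iff_mem_nhds, nhds_eq_principal_Ici, Filter.mem_principal]

theorem mem_closure_iff {s : Set α} {a : α} : a ∈ closure s ↔ ∃ b ∈ s, a ≤ b := by
  rw [closure_eq_lowerClosure, SetLike.mem_coe, mem_lowerClosure]

theorem closure_inter_closure_subset_interior_closure_union
    (h2 : AtMostTwoProperSuccessors α) {P Q : Set α} (hP : IsOpen P)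
    (hQ : IsOpen Q) (hPQ : Disjoint P Q) :
    closure P ∩ closure Q ⊆ interior (closure (P ∪ Q)) := by
  rintro x ⟨hxP, hxQ⟩
  obtain ⟨p, hp, hxp⟩ := mem_closure_iff.1 hxP
  obtain ⟨q, hq, hxq⟩ := mem_closure_iff.1 hxQ
  have hpq : p ≠ q := hPQ.ne_of_mem hp hq
  have hpx : p ≠ x := by
    rintro rfl
    exact hPQ.ne_of_mem (isOpen_iff_isUpperSet.1 hP hxq hp) hq rfl
  have hqx : q ≠ x := by
    rintro rfl
    exact hPQ.ne_of_mem hp (isOpen_iff_isUpperSet.1 hQ hxp hq) rfl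
  refine mem_interior_iff.2 fun y hxy => ?_
  obtain rfl | hyx := eq_or_ne y x
  · exact closure_mono subset_union_left hxP
  rcases h2 x p q y hxp hxq hxy hpx hqx hyx with h | rfl | rfl
  · exact absurd h hpq
  · exact subset_closure (.inl hp)
  · exact subset_closure (.inr hq)

theorem disjoint_closure_of_union_eq_interior (h2 : AtMostTwoProperSuccessors α)
    {s P Q : Set α} (hs : closure (interior s) = s) (hP : IsOpen P) (hQ : IsOpen Q)
    (hPQ : Disjoint P Q) (hunion : P ∪ Q = interior s) :
    Disjoint (closure P) (closure Q) := by
  refine Set.disjoint_left.2 fun x hxP hxQ => ?_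
  have hx := closure_inter_closure_subset_interior_closure_union h2 hP hQ hPQ ⟨hxP, hxQ⟩
  rw [hunion, hs, ← hunion] at hx
  rcases hx with hx | hx
  · exact (hPQ.closure_right hP).notMem_of_mem_left hx hxQ
  · exact (hPQ.symm.closure_right hQ).notMem_of_mem_left hx hxP

theorem isConnected_iff_isConnected_interior (h2 : AtMostTwoProperSuccessors α) {s : Set α}
    (hs : closure (interior s) = s) : IsConnected s ↔ IsConnected (interior s) := by
  refine ⟨fun h => ⟨?_, ?_⟩, fun h => hs ▸ h.closure⟩
  · rw [← closure_nonempty_iff, hs]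
    exact h.nonempty
  · refine isOpen_interior.isPreconnected_of_isPreconnected_closure ?_
      fun _ _ => disjoint_closure_of_union_eq_interior h2 hs
    rw [hs]
    exact h.isPreconnected

end Topology.IsUpperSet

theorem twoQuasiSaw_regularClosed_connected_iff_interior_connected_general
    (W : Type*) (R : W → W → Prop)
    (hrefl : ∀ x, R x x)
    (htrans : ∀ x y z, R x y → R y z → R x z)
    (h2 : ∀ x y z w, R x y → R x z → R x w → y ≠ x → z ≠ x → w ≠ x →
      y = z ∨ y = w ∨ z = w)
    (X : Set W) :
    letI : TopologicalSpace W := aleksandrov W R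
    X = closure (interior X) → (IsConnected X ↔ IsConnected (interior X)) := by
  let _ : Preorder W := { le := R, le_refl := hrefl, le_trans := htrans }
  let _ : TopologicalSpace W := aleksandrov W R
  have : Topology.IsUpperSet W := ⟨aleksandrov_le_eq_upperSet W⟩
  exact fun hX => Topology.IsUpperSet.isConnected_iff_isConnected_interior h2 hX.symm

/-- In a 2-quasi-saw (a quasi-saw in which no point has more than two proper
`R`-successors) with the Aleksandrov topology, a regular closed set is connected iff its
interior is connected. -/
theorem twoQuasiSaw_regularClosed_connected_iff_interior_connected
    (W : Type*) (R : W → W → Prop)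
    (hrefl : ∀ x, R x x)
    (htrans : ∀ x y z, R x y → R y z → R x z)
    (hanti : ∀ x y, R x y → R y x → x = y)
    (hqs : ∀ x, depthZero R x ∨ (∀ y, R x y → y = x ∨ depthZero R y))
    (h2 : ∀ x y z w, R x y → R x z → R x w → y ≠ x → z ≠ x → w ≠ x →
      y = z ∨ y = w ∨ z = w)
    (X : Set W) :
    letI : TopologicalSpace W := aleksandrov W R
    X = closure (interior X) → (IsConnected X ↔ IsConnected (interior X)) :=
  twoQuasiSaw_regularClosed_connected_iff_interior_connected_general W R hrefl htrans h2 X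
end

section
/- There exist three regular closed subsets r₁, r₂, r₃ of ℝ² such that each rᵢ has connected interior, the union r₁ ∪ r₂ ∪ r₃ has connected interior, but neither r₁ ∪ r₂ nor r₁ ∪ r₃ has connected interior. -/
/-!
Let `r₁` be the closed left half-plane and `r₂`, `r₃` the closures of the regions above and
below the graph of `wiggle x = x⁻¹ cos x⁻¹` over `x > 0`. Both regions are shears of open
quadrants, hence open and connected, and the interior of the closure of a connected open set is
connected. Since the amplitude `x⁻¹` of the oscillation is unbounded, each region accumulates on
the whole axis `x = 0`. So `r₁ ∪ r₂ ∪ r₃` is the whole plane, whereas the interior of `r₁ ∪ r₂`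
misses the axis, being disjoint from the open region below the graph, and therefore splits into
its parts in `x < 0` and `x > 0`; likewise for `r₁ ∪ r₃`.
-/

open Filter Set Topology

section Topology

variable {X : Type*} [TopologicalSpace X] {U O S : Set X}

theorem IsOpen.closure_eq_closure_interior_closure (hU : IsOpen U) :
    closure U = closure (interior (closure U)) :=
  (closure_mono hU.subset_interior_closure).antisymm isClosed_closure.closure_interior_subset

theorem IsConnected.interior_closure (hc : IsConnected U) (hU : IsOpen U) :
    IsConnected (interior (closure U)) :=
  hc.subset_closure hU.subset_interior_closure interior_subset

theorem notMem_interior_closure_of_disjoint {p : X} (hO : IsOpen O) (hOS : Disjoint O S)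
    (hp : p ∈ closure O) : p ∉ interior (closure S) :=
  ((hOS.closure_right hO).mono_right interior_subset).closure_left isOpen_interior
    |>.notMem_of_mem_left hp

end Topology

namespace WigglyRegions

theorem tendsto_vec_two {ι : Type*} {l : Filter ι} {a b : ι → ℝ} {p : Fin 2 → ℝ}
    (ha : Tendsto a l (𝓝 (p 0))) (hb : Tendsto b l (𝓝 (p 1))) :
    Tendsto (fun k => ![a k, b k]) l (𝓝 p) :=
  tendsto_pi_nhds.2 (Fin.forall_fin_two.2 ⟨by simpa, by simpa⟩)

def shear (g : ℝ → ℝ) (q : Fin 2 → ℝ) : Fin 2 → ℝ := ![q 0, q 1 + g (q 0)]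

section Shear

variable {g : ℝ → ℝ}

@[simp] theorem shear_apply_zero (q : Fin 2 → ℝ) : shear g q 0 = q 0 := rfl

@[simp] theorem shear_apply_one (q : Fin 2 → ℝ) : shear g q 1 = q 1 + g (q 0) := rfl

theorem shear_neg_shear (g : ℝ → ℝ) (q : Fin 2 → ℝ) : shear (-g) (shear g q) = q := by
  ext i
  fin_cases i <;> simp [shear]

theorem image_shear (C : Set (Fin 2 → ℝ)) : shear g '' C = shear (-g) ⁻¹' C :=
  congrFun (image_eq_preimage_of_inverse (shear_neg_shear g)
    fun q => by simpa using shear_neg_shear (-g) q) C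

theorem continuousOn_shear (hg : ContinuousOn g (Ioi 0)) :
    ContinuousOn (shear g) {q | 0 < q 0} :=
  continuousOn_pi.2 <| Fin.forall_fin_two.2
    ⟨(continuous_apply 0).continuousOn,
      (continuous_apply 1).continuousOn.add
        (hg.comp (continuous_apply 0).continuousOn fun _ hq => hq)⟩

theorem isOpen_image_shear (hg : ContinuousOn g (Ioi 0)) {C : Set (Fin 2 → ℝ)}
    (hC : IsOpen C) (hCpos : C ⊆ {q | 0 < q 0}) : IsOpen (shear g '' C) := by
  have hsub : shear (-g) ⁻¹' C ⊆ {q | 0 < q 0} := fun q hq => by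
    simpa using hCpos hq
  rw [image_shear, ← inter_eq_self_of_subset_right hsub]
  exact (continuousOn_shear hg.neg).isOpen_inter_preimage
    (isOpen_lt continuous_const (continuous_apply 0)) hC

theorem isConnected_image_shear (hg : ContinuousOn g (Ioi 0)) {C : Set (Fin 2 → ℝ)}
    (hC : IsConnected C) (hCpos : C ⊆ {q | 0 < q 0}) : IsConnected (shear g '' C) :=
  hC.image _ ((continuousOn_shear hg).mono hCpos)

end Shear

noncomputable def wiggle (x : ℝ) : ℝ := x⁻¹ * Real.cos x⁻¹

def leftHalf : Set (Fin 2 → ℝ) := {p | p 0 < 0}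

noncomputable def above : Set (Fin 2 → ℝ) := shear wiggle '' {q | 0 < q 0 ∧ 0 < q 1}

noncomputable def below : Set (Fin 2 → ℝ) := shear wiggle '' {q | 0 < q 0 ∧ q 1 < 0}

theorem continuousOn_wiggle : ContinuousOn wiggle (Ioi 0) := by
  have hinv : ContinuousOn (fun x : ℝ => x⁻¹) (Ioi 0) :=
    continuousOn_inv₀.mono fun x hx => (mem_Ioi.1 hx).ne'
  exact hinv.mul (Real.continuous_cos.comp_continuousOn hinv)

theorem wiggle_inv (t : ℝ) : wiggle t⁻¹ = t * Real.cos t := by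
  rw [wiggle, inv_inv]

theorem mem_above {p : Fin 2 → ℝ} : p ∈ above ↔ 0 < p 0 ∧ wiggle (p 0) < p 1 := by
  simp [above, image_shear, shear, ← sub_eq_add_neg]

theorem mem_below {p : Fin 2 → ℝ} : p ∈ below ↔ 0 < p 0 ∧ p 1 < wiggle (p 0) := by
  simp [below, image_shear, shear, ← sub_eq_add_neg]

theorem isOpen_leftHalf : IsOpen leftHalf := isOpen_lt (continuous_apply 0) continuous_const

theorem isConnected_leftHalf : IsConnected leftHalf :=
  (convex_halfSpace_lt (f := fun p : Fin 2 → ℝ => p 0) ⟨fun _ _ => rfl, fun _ _ => rfl⟩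
    0).isConnected ⟨![-1, 0], by simp⟩

theorem isOpen_rightHalf_inter {P : Set ℝ} (hP : IsOpen P) :
    IsOpen {q : Fin 2 → ℝ | 0 < q 0 ∧ q 1 ∈ P} :=
  (isOpen_lt continuous_const (continuous_apply 0)).inter (hP.preimage (continuous_apply 1))

theorem isConnected_rightHalf_inter {P : Set ℝ} (hP : Convex ℝ P) (hne : P.Nonempty) :
    IsConnected {q : Fin 2 → ℝ | 0 < q 0 ∧ q 1 ∈ P} := by
  obtain ⟨y, hy⟩ := hne
  refine Convex.isConnected ?_ ⟨![1, y], by simpa using hy⟩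
  exact ((convex_Ioi 0).is_linear_preimage (LinearMap.proj 0).isLinear).inter
    (hP.is_linear_preimage (LinearMap.proj 1).isLinear)

theorem isOpen_above : IsOpen above :=
  isOpen_image_shear continuousOn_wiggle (isOpen_rightHalf_inter isOpen_Ioi) fun _ hq => hq.1

theorem isOpen_below : IsOpen below :=
  isOpen_image_shear continuousOn_wiggle (isOpen_rightHalf_inter isOpen_Iio) fun _ hq => hq.1

theorem isConnected_above : IsConnected above :=
  isConnected_image_shear continuousOn_wiggle
    (isConnected_rightHalf_inter (convex_Ioi 0) nonempty_Ioi) fun _ hq => hq.1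

theorem isConnected_below : IsConnected below :=
  isConnected_image_shear continuousOn_wiggle
    (isConnected_rightHalf_inter (convex_Iio 0) nonempty_Iio) fun _ hq => hq.1

theorem disjoint_below_above : Disjoint below above :=
  disjoint_left.2 fun _ hb ha => (mem_below.1 hb).2.asymm (mem_above.1 ha).2

theorem mem_closure_of_tendsto_inv {S : Set (Fin 2 → ℝ)} {p : Fin 2 → ℝ} (hp : p 0 = 0)
    {s : ℕ → ℝ} (hs : Tendsto s atTop atTop) (hS : ∀ᶠ k in atTop, ![(s k)⁻¹, p 1] ∈ S) :
    p ∈ closure S :=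
  mem_closure_of_tendsto (tendsto_vec_two (hp ▸ hs.inv_tendsto_atTop) tendsto_const_nhds) hS

theorem tendsto_nat_mul_two_pi : Tendsto (fun k : ℕ => k * (2 * Real.pi)) atTop atTop :=
  tendsto_natCast_atTop_atTop.atTop_mul_const Real.two_pi_pos

theorem axis_subset_closure_above : {p : Fin 2 → ℝ | p 0 = 0} ⊆ closure above := by
  intro p hp
  have hs := tendsto_atTop_add_const_right _ Real.pi tendsto_nat_mul_two_pi
  refine mem_closure_of_tendsto_inv hp hs ?_
  filter_upwards [hs.eventually_gt_atTop 0, hs.eventually_gt_atTop (-p 1)] with k hpos hlt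
  simp only [mem_above, Matrix.cons_val_zero, Matrix.cons_val_one, wiggle_inv,
    Real.cos_add_pi, Real.cos_nat_mul_two_pi, mul_neg_one]
  exact ⟨inv_pos.2 hpos, neg_lt.1 hlt⟩

theorem axis_subset_closure_below : {p : Fin 2 → ℝ | p 0 = 0} ⊆ closure below := by
  intro p hp
  have hs := tendsto_nat_mul_two_pi
  refine mem_closure_of_tendsto_inv hp hs ?_
  filter_upwards [hs.eventually_gt_atTop 0, hs.eventually_gt_atTop (p 1)] with k hpos hlt
  simp only [mem_below, Matrix.cons_val_zero, Matrix.cons_val_one, wiggle_inv,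
    Real.cos_nat_mul_two_pi, mul_one]
  exact ⟨inv_pos.2 hpos, hlt⟩

theorem graph_subset_closure_above :
    {p : Fin 2 → ℝ | 0 < p 0 ∧ p 1 = wiggle (p 0)} ⊆ closure above := by
  rintro p ⟨hpos, hgraph⟩
  refine mem_closure_of_tendsto (b := atTop) (f := fun k : ℕ => ![p 0, p 1 + 1 / (k + 1)])
    (tendsto_vec_two tendsto_const_nhds ?_) (Eventually.of_forall fun k => ?_)
  · simpa using tendsto_const_nhds.add (tendsto_one_div_add_atTop_nhds_zero_nat (𝕜 := ℝ))
  · simp only [mem_above, Matrix.cons_val_zero, Matrix.cons_val_one, ← hgraph]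
    exact ⟨hpos, lt_add_of_pos_right _ Nat.one_div_pos_of_nat⟩

theorem dense_leftHalf_union : Dense (leftHalf ∪ above ∪ below) := by
  have habove : closure above ⊆ closure (leftHalf ∪ above ∪ below) :=
    closure_mono (subset_union_right.trans subset_union_left)
  intro p
  rcases lt_trichotomy (p 0) 0 with hneg | hzero | hpos
  · exact subset_closure (Or.inl (Or.inl hneg))
  · exact habove (axis_subset_closure_above hzero)
  rcases lt_trichotomy (p 1) (wiggle (p 0)) with hlt | heq | hgt
  · exact subset_closure (Or.inr (mem_below.2 ⟨hpos, hlt⟩))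
  · exact habove (graph_subset_closure_above ⟨hpos, heq⟩)
  · exact subset_closure (Or.inl (Or.inr (mem_above.2 ⟨hpos, hgt⟩)))

theorem not_isConnected_interior_closure_leftHalf_union {A O : Set (Fin 2 → ℝ)}
    (hA : IsOpen A) (hAne : A.Nonempty) (hApos : A ⊆ {p | 0 < p 0}) (hO : IsOpen O)
    (hOpos : O ⊆ {p | 0 < p 0}) (hOA : Disjoint O A) (haxis : {p | p 0 = 0} ⊆ closure O) :
    ¬ IsConnected (interior (closure (leftHalf ∪ A))) := by
  have hOleft : Disjoint O (leftHalf ∪ A) :=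
    disjoint_union_right.2
      ⟨disjoint_left.2 fun p hp hl => lt_asymm (hOpos hp) (show p 0 < 0 from hl), hOA⟩
  have hint := (isOpen_leftHalf.union hA).subset_interior_closure
  have hleft : ![-1, 0] ∈ interior (closure (leftHalf ∪ A)) := hint (Or.inl (by simp [leftHalf]))
  obtain ⟨q, hq⟩ := hAne
  rintro ⟨-, hconn⟩
  obtain ⟨r, hr, hr0⟩ := hconn.intermediate_value hleft (hint (Or.inr hq))
    (f := fun p => p 0) (continuous_apply 0).continuousOn ⟨by simp, (hApos hq).le⟩
  exact notMem_interior_closure_of_disjoint hO hOleft (haxis hr0) hr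

end WigglyRegions

open WigglyRegions in
/-- There exist three regular closed subsets of `ℝ²`, each with connected interior, whose
total union has connected interior, but such that neither `r₁ ∪ r₂` nor `r₁ ∪ r₃` has
connected interior. -/
theorem exists_wiggly_regions_in_plane :
    ∃ r₁ r₂ r₃ : Set (Fin 2 → ℝ),
      r₁ = closure (interior r₁) ∧ r₂ = closure (interior r₂) ∧ r₃ = closure (interior r₃) ∧
      IsConnected (interior r₁) ∧ IsConnected (interior r₂) ∧ IsConnected (interior r₃) ∧
      IsConnected (interior (r₁ ∪ r₂ ∪ r₃)) ∧
      ¬ IsConnected (interior (r₁ ∪ r₂)) ∧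
      ¬ IsConnected (interior (r₁ ∪ r₃)) := by
  refine ⟨closure leftHalf, closure above, closure below,
    isOpen_leftHalf.closure_eq_closure_interior_closure,
    isOpen_above.closure_eq_closure_interior_closure,
    isOpen_below.closure_eq_closure_interior_closure,
    isConnected_leftHalf.interior_closure isOpen_leftHalf,
    isConnected_above.interior_closure isOpen_above,
    isConnected_below.interior_closure isOpen_below, ?_, ?_, ?_⟩
  · rw [← closure_union, ← closure_union, dense_leftHalf_union.closure_eq, interior_univ]
    exact isConnected_univ
  · rw [← closure_union]
    exact not_isConnected_interior_closure_leftHalf_union isOpen_above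
      isConnected_above.nonempty (fun _ hp => (mem_above.1 hp).1) isOpen_below
      (fun _ hp => (mem_below.1 hp).1) disjoint_below_above axis_subset_closure_below
  · rw [← closure_union]
    exact not_isConnected_interior_closure_leftHalf_union isOpen_below
      isConnected_below.nonempty (fun _ hp => (mem_below.1 hp).1) isOpen_above
      (fun _ hp => (mem_above.1 hp).1) disjoint_below_above.symm axis_subset_closure_above
end

section
/- There do not exist three regular closed polygons r₁, r₂, r₃ in ℝ² (elements of the Boolean subalgebra of RC(ℝ²) generated by half-planes) such that each rᵢ has connected interior, r₁ ∪ r₂ ∪ r₃ has connected interior, but neither r₁ ∪ r₂ nor r₁ ∪ r₃ has connected interior. -/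
/-- Membership in the Boolean subalgebra of `RC(ℝ²)` generated by closed half-planes:
regular closed polygons. -/
inductive IsPolygon : Set (Fin 2 → ℝ) → Prop
  | halfplane (a : Fin 2 → ℝ) (c : ℝ) (ha : a ≠ 0) :
      IsPolygon {x | ∑ i, a i * x i ≤ c}
  | sup (X Y : Set (Fin 2 → ℝ)) : IsPolygon X → IsPolygon Y → IsPolygon (X ∪ Y)
  | inf (X Y : Set (Fin 2 → ℝ)) : IsPolygon X → IsPolygon Y →
      IsPolygon (closure (interior (X ∩ Y)))
  | compl (X : Set (Fin 2 → ℝ)) : IsPolygon X → IsPolygon (closure Xᶜ)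

/-!
A polygon is regular closed and its frontier lies on finitely many lines. Let `X`, `Y` be
polygons with connected interiors. At a point of `X ∩ Y` lying on at most one of the lines of
`X ∪ Y`, a small convex neighbourhood meets `interior (X ∪ Y)` in a connected set (the whole
neighbourhood, or one of its open halves plus part of the line), and this set links
`interior X` to `interior Y`. Since two distinct lines meet at most once, `X ∩ Y` is finite as
soon as `interior (X ∪ Y)` is disconnected.

Hence `r₁` meets `r₂ ∪ r₃` in a finite set `K`. In the plane a connected open set stays connected
when a finite set is removed, yet `interior (r₁ ∪ r₂ ∪ r₃) \ K` is covered by the open sets `r₁ᶜ`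
and `(r₂ ∪ r₃)ᶜ`, which are disjoint there and both meet it.
-/

open Set Metric Module

section Topology

variable {α : Type*} [TopologicalSpace α]

theorem IsPreconnected.subset_interior_or_disjoint {H F : Set α} (hH : IsPreconnected H)
    (hHF : Disjoint H (frontier F)) : H ⊆ interior F ∨ Disjoint H F := by
  have hcover : H ⊆ interior F ∪ (closure F)ᶜ := fun z hz ↦ by
    by_contra hz'
    simp only [mem_union, mem_compl_iff, not_or, not_not] at hz'
    exact hHF.ne_of_mem hz ⟨hz'.2, hz'.1⟩ rfl
  refine (hH.subset_or_subset isOpen_interior isClosed_closure.isOpen_compl ?_ hcover).imp id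
    fun hH' ↦ (disjoint_compl_left.mono_right subset_closure).mono_left hH'
  exact disjoint_compl_right.mono_left (interior_subset.trans subset_closure)

theorem isPreconnected_interior_union_of_bridge {X Y P : Set α}
    (hX : closure (interior X) = X) (hY : closure (interior Y) = Y)
    (hXc : IsPreconnected (interior X)) (hYc : IsPreconnected (interior Y))
    (hP : IsPreconnected P) (hPU : P ⊆ interior (X ∪ Y)) (hPX : (interior X ∩ P).Nonempty)
    (hPY : (interior Y ∩ P).Nonempty) : IsPreconnected (interior (X ∪ Y)) := by
  have hC : IsPreconnected (interior X ∪ P ∪ interior Y) := (hXc.union' hPX hP).union'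
    ((inter_comm (interior Y) P ▸ hPY).mono (inter_subset_inter_left _ subset_union_right)) hYc
  refine hC.subset_closure (union_subset (union_subset (interior_mono subset_union_left) hPU)
    (interior_mono subset_union_right)) ?_
  calc interior (X ∪ Y) ⊆ X ∪ Y := interior_subset
    _ = closure (interior X ∪ interior Y) := by rw [closure_union, hX, hY]
    _ ⊆ closure (interior X ∪ P ∪ interior Y) :=
      closure_mono (union_subset_union_left _ subset_union_left)

end Topology

section Connectedness

variable {E : Type*} [NormedAddCommGroup E] [NormedSpace ℝ E]

theorem isPreconnected_ball_diff_center (h : 1 < Module.rank ℝ E) (x : E) (r : ℝ) :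
    IsPreconnected (ball x r \ {x}) := by
  rcases le_or_gt r 0 with hr | hr
  · simpa [ball_eq_empty.2 hr] using isPreconnected_empty
  let f : E → E := fun y ↦ x + (r * (1 + ‖y‖)⁻¹) • y
  have hf : Continuous f := by
    have : ∀ y : E, 1 + ‖y‖ ≠ 0 := fun y ↦ by positivity
    fun_prop (disch := exact this _)
  have himage : f '' {0}ᶜ = ball x r \ {x} := by
    apply Subset.antisymm
    · rintro - ⟨y, hy, rfl⟩
      have hny : 0 < ‖y‖ := norm_pos_iff.2 hy
      have hquot : (1 + ‖y‖)⁻¹ * ‖y‖ < 1 := by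
        rw [inv_mul_lt_iff₀ (by positivity)]; linarith
      refine ⟨?_, fun hfy ↦ ?_⟩
      · rw [mem_ball, dist_eq_norm, add_sub_cancel_left, norm_smul,
          Real.norm_of_nonneg (by positivity), mul_assoc]
        nlinarith
      · have : (r * (1 + ‖y‖)⁻¹) • y = 0 := by simpa [f] using hfy
        exact smul_ne_zero (by positivity) hy this
    · rintro z ⟨hz, hzx⟩
      have hs : 0 < ‖z - x‖ := norm_pos_iff.2 (sub_ne_zero.2 hzx)
      have hsr : ‖z - x‖ < r := by rwa [mem_ball, dist_eq_norm] at hz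
      have hrs : r - ‖z - x‖ ≠ 0 := sub_ne_zero.2 hsr.ne'
      refine ⟨(r - ‖z - x‖)⁻¹ • (z - x), smul_ne_zero (inv_ne_zero hrs) (by simpa using hs.ne'),
        ?_⟩
      have hcoef : r * (1 + ‖(r - ‖z - x‖)⁻¹ • (z - x)‖)⁻¹ = r - ‖z - x‖ := by
        rw [norm_smul, Real.norm_of_nonneg (by simp; linarith)]
        field_simp
        rw [sub_add_cancel, div_self hr.ne']
      simp only [f, hcoef, smul_smul, mul_inv_cancel₀ hrs, one_smul, add_sub_cancel]
  rw [← himage]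
  exact (isConnected_compl_singleton_of_one_lt_rank h 0).isPreconnected.image f hf.continuousOn

theorem IsOpen.isPreconnected_diff_singleton (h : 1 < Module.rank ℝ E) {U : Set E}
    (hU : IsOpen U) (hUc : IsPreconnected U) (k : E) : IsPreconnected (U \ {k}) := by
  by_cases hk : k ∈ U
  swap
  · rwa [sdiff_singleton_eq_self hk]
  obtain ⟨ε, hε, hεU⟩ := Metric.isOpen_iff.1 hU k hk
  have hsub : ball k ε \ {k} ⊆ U \ {k} := sdiff_subset_sdiff_left hεU
  rw [isPreconnected_iff_subset_of_disjoint]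
  intro u v hu hv huv hdisj
  have hball : ball k ε \ {k} ⊆ u ∨ ball k ε \ {k} ⊆ v :=
    isPreconnected_iff_subset_of_disjoint.1 (isPreconnected_ball_diff_center h k ε) u v hu hv
      (hsub.trans huv) (subset_empty_iff.1 (hdisj ▸ inter_subset_inter_left _ hsub))
  wlog hbu : ball k ε \ {k} ⊆ u generalizing u v
  · exact (this v u hv hu (union_comm u v ▸ huv) (inter_comm u v ▸ hdisj) hball.symm
      (hball.resolve_left hbu)).symm
  -- `u ∪ ball k ε` and `v \ {k}` separate `U` itself
  have hmem_u : ∀ z ∈ U \ {k}, z ∈ u ∪ ball k ε → z ∈ u := fun z hz hzu ↦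
    hzu.elim id fun hzb ↦ hbu ⟨hzb, hz.2⟩
  have hcover : U ⊆ (u ∪ ball k ε) ∪ (v \ {k}) := by
    intro z hz
    by_cases hzk : z = k
    · exact Or.inl (Or.inr (hzk ▸ mem_ball_self hε))
    · exact (huv ⟨hz, hzk⟩).imp Or.inl fun hzv ↦ ⟨hzv, hzk⟩
  have hsep : U ∩ ((u ∪ ball k ε) ∩ (v \ {k})) = ∅ :=
    subset_empty_iff.1 fun z ⟨hzU, hzu, hzv, hzk⟩ ↦
      hdisj.subset ⟨⟨hzU, hzk⟩, hmem_u z ⟨hzU, hzk⟩ hzu, hzv⟩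
  rcases isPreconnected_iff_subset_of_disjoint.1 hUc _ _ (hu.union isOpen_ball)
      (hv.sdiff isClosed_singleton) hcover hsep with hU' | hU'
  · exact Or.inl fun z hz ↦ hmem_u z hz (hU' hz.1)
  · exact Or.inr fun z hz ↦ (hU' hz.1).1

theorem IsOpen.isPreconnected_diff_finite (h : 1 < Module.rank ℝ E) {U : Set E}
    (hU : IsOpen U) (hUc : IsPreconnected U) {K : Set E} (hK : K.Finite) :
    IsPreconnected (U \ K) := by
  induction K, hK using Set.Finite.induction_on generalizing U with
  | empty => simpa
  | insert _ _ ih =>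
    rw [insert_eq, ← sdiff_sdiff]
    exact ih (hU.sdiff isClosed_singleton) (hU.isPreconnected_diff_singleton h hUc _)

theorem not_isPreconnected_interior_union_of_finite_inter (h : 1 < Module.rank ℝ E)
    {X Y : Set E} (hX : IsClosed X) (hY : IsClosed Y) (hXY : (X ∩ Y).Finite)
    (hXi : (interior X).Nonempty) (hYi : (interior Y).Nonempty) :
    ¬ IsPreconnected (interior (X ∪ Y)) := by
  intro hU
  have : Nontrivial E := rank_pos_iff_nontrivial.1 (zero_lt_one.trans h)
  have hdense := hXY.countable.dense_compl ℝ
  obtain ⟨x, hxX, hxK⟩ := hdense.inter_open_nonempty _ isOpen_interior hXi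
  obtain ⟨y, hyY, hyK⟩ := hdense.inter_open_nonempty _ isOpen_interior hYi
  -- off the finite set `X ∩ Y`, the open sets `Yᶜ` and `Xᶜ` separate `interior (X ∪ Y)`
  obtain ⟨z, ⟨hzU, -⟩, hzY, hzX⟩ := isOpen_interior.isPreconnected_diff_finite h hU hXY
    Yᶜ Xᶜ hY.isOpen_compl hX.isOpen_compl
    (fun z ⟨hzU, hzK⟩ ↦ (interior_subset hzU).elim
      (fun hzX ↦ Or.inl fun hzY ↦ hzK ⟨hzX, hzY⟩) (fun hzY ↦ Or.inr fun hzX ↦ hzK ⟨hzX, hzY⟩))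
    ⟨x, ⟨interior_mono subset_union_left hxX, hxK⟩, fun hxY ↦ hxK ⟨interior_subset hxX, hxY⟩⟩
    ⟨y, ⟨interior_mono subset_union_right hyY, hyK⟩, fun hyX ↦ hyK ⟨hyX, interior_subset hyY⟩⟩
  exact (interior_subset hzU).elim hzX hzY

end Connectedness

section Hyperplane

variable {E : Type*} [NormedAddCommGroup E] [NormedSpace ℝ E] {f : StrongDual ℝ E} {c : ℝ}

theorem ContinuousLinearMap.closure_preimage_Ioi (hf : f ≠ 0) (c : ℝ) :
    closure (f ⁻¹' Ioi c) = f ⁻¹' Ici c := by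
  rw [← (f.isOpenMap_of_ne_zero hf).preimage_closure_eq_closure_preimage f.continuous,
    closure_Ioi]

theorem ContinuousLinearMap.interior_preimage_singleton (hf : f ≠ 0) (c : ℝ) :
    interior (f ⁻¹' {c}) = ∅ := by
  rw [← (f.isOpenMap_of_ne_zero hf).preimage_interior_eq_interior_preimage f.continuous,
    interior_singleton, preimage_empty]

variable {B F : Set E}

theorem Convex.inter_preimage_subset_interior_or_disjoint (hB : Convex ℝ B)
    (hfr : frontier F ∩ B ⊆ f ⁻¹' {c}) {s : Set ℝ} (hs : Convex ℝ s) (hcs : c ∉ s) :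
    B ∩ f ⁻¹' s ⊆ interior F ∨ Disjoint (B ∩ f ⁻¹' s) F :=
  (hB.inter (hs.linear_preimage f.toLinearMap)).isPreconnected.subset_interior_or_disjoint
    (disjoint_left.2 fun _ hz hzF ↦ hcs (hfr ⟨hzF, hz.1⟩ ▸ hz.2))

theorem Convex.isPreconnected_inter_interior_of_disjoint_preimage_Iio (hB : Convex ℝ B)
    (hBo : IsOpen B) (hf : f ≠ 0) (hfr : frontier F ∩ B ⊆ f ⁻¹' {c})
    (hlow : Disjoint (B ∩ f ⁻¹' Iio c) F) : IsPreconnected (B ∩ interior F) := by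
  have hge : B ∩ interior F ⊆ B ∩ f ⁻¹' Ici c := fun z ⟨hzB, hzF⟩ ↦
    ⟨hzB, show c ≤ f z from not_lt.1 fun hz ↦ hlow.ne_of_mem ⟨hzB, hz⟩ (interior_subset hzF) rfl⟩
  rcases hB.inter_preimage_subset_interior_or_disjoint hfr (convex_Ioi c) (lt_irrefl c)
    with hsub | hdisj
  · have hupper := hB.inter ((convex_Ioi c).linear_preimage f.toLinearMap)
    refine hupper.isPreconnected.subset_closure (fun z hz ↦ ⟨hz.1, hsub hz⟩) ?_
    calc B ∩ interior F ⊆ B ∩ closure (f ⁻¹' Ioi c) := by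
          rw [f.closure_preimage_Ioi hf]; exact hge
      _ ⊆ closure (B ∩ f ⁻¹' Ioi c) := hBo.inter_closure
  · have hline : B ∩ interior F ⊆ f ⁻¹' {c} := fun z hz ↦ eq_of_le_of_not_lt' (hge hz).2
      fun hlt ↦ hdisj.ne_of_mem ⟨hz.1, hlt⟩ (interior_subset hz.2) rfl
    have hempty : B ∩ interior F = ∅ := by
      rw [← subset_empty_iff, ← f.interior_preimage_singleton hf c]
      exact interior_maximal hline (hBo.inter isOpen_interior)
    rw [hempty]
    exact isPreconnected_empty

theorem Convex.isPreconnected_inter_interior (hB : Convex ℝ B) (hBo : IsOpen B)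
    (hF : IsClosed F) (hf : f ≠ 0) (hfr : frontier F ∩ B ⊆ f ⁻¹' {c}) :
    IsPreconnected (B ∩ interior F) := by
  by_cases hlow : Disjoint (B ∩ f ⁻¹' Iio c) F
  · exact hB.isPreconnected_inter_interior_of_disjoint_preimage_Iio hBo hf hfr hlow
  by_cases hup : Disjoint (B ∩ f ⁻¹' Ioi c) F
  · have hline : (-f) ⁻¹' {-c} = f ⁻¹' {c} := by ext; simp
    have hhalf : (-f) ⁻¹' Iio (-c) = f ⁻¹' Ioi c := by ext; simp
    exact hB.isPreconnected_inter_interior_of_disjoint_preimage_Iio hBo (neg_ne_zero.2 hf)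
      (hline ▸ hfr) (hhalf ▸ hup)
  have hlow' := (hB.inter_preimage_subset_interior_or_disjoint hfr (convex_Iio c)
    (lt_irrefl c)).resolve_right hlow
  have hup' := (hB.inter_preimage_subset_interior_or_disjoint hfr (convex_Ioi c)
    (lt_irrefl c)).resolve_right hup
  -- both open halves of `B` lie in `F`, hence so does their closure, which contains `B`
  have hBF : B ⊆ F := by
    have hdense : Dense (f ⁻¹' {c})ᶜ :=
      interior_eq_empty_iff_dense_compl.1 (f.interior_preimage_singleton hf c)
    refine (hdense.open_subset_closure_inter hBo).trans (hF.closure_subset_iff.2 ?_)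
    rintro z ⟨hzB, hzc⟩
    rcases lt_or_gt_of_ne (hzc : f z ≠ c) with hz | hz
    exacts [interior_subset (hlow' ⟨hzB, hz⟩), interior_subset (hup' ⟨hzB, hz⟩)]
  rw [inter_eq_left.2 (interior_maximal hBF hBo)]
  exact hB.isPreconnected

end Hyperplane

section HyperplaneArrangement

variable {E : Type*} [NormedAddCommGroup E] [NormedSpace ℝ E]

def CoveredByHyperplanes (S : Set E) : Prop :=
  ∃ s : Set (StrongDual ℝ E × ℝ), s.Finite ∧ (∀ p ∈ s, p.1 ≠ 0) ∧ S ⊆ ⋃ p ∈ s, p.1 ⁻¹' {p.2}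

theorem CoveredByHyperplanes.mono {S T : Set E} (hT : CoveredByHyperplanes T) (hST : S ⊆ T) :
    CoveredByHyperplanes S :=
  let ⟨s, hs, hs0, hTs⟩ := hT
  ⟨s, hs, hs0, hST.trans hTs⟩

theorem CoveredByHyperplanes.union {S T : Set E} (hS : CoveredByHyperplanes S)
    (hT : CoveredByHyperplanes T) : CoveredByHyperplanes (S ∪ T) := by
  obtain ⟨s, hs, hs0, hSs⟩ := hS
  obtain ⟨t, ht, ht0, hTt⟩ := hT
  refine ⟨s ∪ t, hs.union ht, fun p hp ↦ hp.elim (hs0 p) (ht0 p), ?_⟩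
  rw [biUnion_union]
  exact union_subset_union hSs hTt

theorem coveredByHyperplanes_preimage_singleton {f : StrongDual ℝ E} (hf : f ≠ 0) (c : ℝ) :
    CoveredByHyperplanes (f ⁻¹' {c}) :=
  ⟨{(f, c)}, finite_singleton _, by simpa using hf, by simp⟩

def crossingPoints (s : Set (StrongDual ℝ E × ℝ)) : Set E :=
  ⋃ p ∈ s, ⋃ q ∈ s, {x | p.1 x = p.2 ∧ q.1 x = q.2 ∧ p.1 ⁻¹' {p.2} ≠ q.1 ⁻¹' {q.2}}

theorem exists_inter_ball_subset_preimage_singleton {S : Set E}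
    {s : Set (StrongDual ℝ E × ℝ)} (hs : s.Finite) (hS : S ⊆ ⋃ p ∈ s, p.1 ⁻¹' {p.2}) {x : E}
    (hx : x ∈ S) (hx' : x ∉ crossingPoints s) :
    ∃ p ∈ s, ∃ ε > 0, S ∩ ball x ε ⊆ p.1 ⁻¹' {p.2} := by
  obtain ⟨p, hp, hxp⟩ := mem_iUnion₂.1 (hS hx)
  have hfar : IsClosed (⋃ q ∈ {q ∈ s | q.1 x ≠ q.2}, q.1 ⁻¹' {q.2}) :=
    (hs.sep _).isClosed_biUnion fun q _ ↦ isClosed_singleton.preimage q.1.continuous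
  obtain ⟨ε, hε, hball⟩ := Metric.isOpen_iff.1 hfar.isOpen_compl x
    (by simp only [mem_compl_iff, mem_iUnion₂, not_exists]; exact fun q hq hxq ↦ hq.2 hxq)
  refine ⟨p, hp, ε, hε, fun z ⟨hzS, hzb⟩ ↦ ?_⟩
  obtain ⟨q, hq, hzq⟩ := mem_iUnion₂.1 (hS hzS)
  by_cases hxq : q.1 x = q.2
  · by_contra hzp
    refine hx' (mem_iUnion₂.2 ⟨p, hp, mem_iUnion₂.2 ⟨q, hq, hxp, hxq, fun hpq ↦ hzp ?_⟩⟩)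
    rw [hpq]
    exact hzq
  · exact absurd (mem_iUnion₂.2 ⟨q, ⟨hq, hxq⟩, hzq⟩) (hball hzb)

theorem exists_isPreconnected_ball_inter_interior {F : Set E} (hF : IsClosed F)
    {s : Set (StrongDual ℝ E × ℝ)} (hs : s.Finite) (hs0 : ∀ p ∈ s, p.1 ≠ 0)
    (hfr : frontier F ⊆ ⋃ p ∈ s, p.1 ⁻¹' {p.2}) {x : E} (hx : x ∈ F)
    (hx' : x ∉ crossingPoints s) : ∃ ε > 0, IsPreconnected (ball x ε ∩ interior F) := by
  by_cases hxi : x ∈ interior F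
  · obtain ⟨ε, hε, hball⟩ := Metric.isOpen_iff.1 isOpen_interior x hxi
    exact ⟨ε, hε, by rw [inter_eq_left.2 hball]; exact isPreconnected_ball⟩
  · obtain ⟨p, hp, ε, hε, hsub⟩ :=
      exists_inter_ball_subset_preimage_singleton hs hfr ⟨subset_closure hx, hxi⟩ hx'
    exact ⟨ε, hε, (convex_ball x ε).isPreconnected_inter_interior isOpen_ball hF (hs0 p hp) hsub⟩

end HyperplaneArrangement

section Plane

variable {E : Type*} [NormedAddCommGroup E] [NormedSpace ℝ E] [FiniteDimensional ℝ E]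

theorem ker_eq_span_singleton_of_finrank_eq_two (hE : finrank ℝ E = 2) {f : StrongDual ℝ E}
    (hf : f ≠ 0) {v : E} (hv : v ≠ 0) (hfv : f v = 0) :
    LinearMap.ker (f : E →ₗ[ℝ] ℝ) = ℝ ∙ v := by
  refine (Submodule.eq_of_le_of_finrank_le ((Submodule.span_singleton_le_iff_mem _ _).2 hfv)
    ?_).symm
  have hlt := Submodule.finrank_lt (s := LinearMap.ker (f : E →ₗ[ℝ] ℝ))
    (by rw [Ne, LinearMap.ker_eq_top]; exact fun h ↦ hf (ContinuousLinearMap.coe_injective h))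
  rw [finrank_span_singleton hv]
  omega

theorem subsingleton_preimage_inter_preimage (hE : finrank ℝ E = 2) {f g : StrongDual ℝ E}
    (hf : f ≠ 0) (hg : g ≠ 0) {c d : ℝ} (hne : f ⁻¹' {c} ≠ g ⁻¹' {d}) :
    (f ⁻¹' {c} ∩ g ⁻¹' {d}).Subsingleton := by
  rintro x ⟨hfx, hgx⟩ y ⟨hfy, hgy⟩
  by_contra hxy
  have hv : y - x ≠ 0 := sub_ne_zero.2 (Ne.symm hxy)
  simp only [mem_preimage, mem_singleton_iff] at hfx hgx hfy hgy
  have hker : LinearMap.ker (f : E →ₗ[ℝ] ℝ) = LinearMap.ker (g : E →ₗ[ℝ] ℝ) := by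
    rw [ker_eq_span_singleton_of_finrank_eq_two hE hf hv (by simp [hfx, hfy]),
      ker_eq_span_singleton_of_finrank_eq_two hE hg hv (by simp [hgx, hgy])]
  refine hne (ext fun z ↦ ?_)
  have := SetLike.ext_iff.1 hker (z - x)
  simp only [LinearMap.mem_ker, ContinuousLinearMap.coe_coe, map_sub, sub_eq_zero] at this
  simp only [mem_preimage, mem_singleton_iff]
  rw [← hfx, ← hgx]
  exact this

theorem Set.Finite.crossingPoints (hE : finrank ℝ E = 2) {s : Set (StrongDual ℝ E × ℝ)}
    (hs : s.Finite) (hs0 : ∀ p ∈ s, p.1 ≠ 0) : (crossingPoints s).Finite :=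
  hs.biUnion fun p hp ↦ hs.biUnion fun q hq ↦ Set.Subsingleton.finite fun _ hx _ hy ↦
    subsingleton_preimage_inter_preimage hE (hs0 p hp) (hs0 q hq) hx.2.2 ⟨hx.1, hx.2.1⟩
      ⟨hy.1, hy.2.1⟩

theorem finite_inter_of_not_isPreconnected_interior_union (hE : finrank ℝ E = 2)
    {X Y : Set E} (hXc : IsClosed X) (hYc : IsClosed Y) (hX : closure (interior X) = X)
    (hY : closure (interior Y) = Y) (hXf : CoveredByHyperplanes (frontier X))
    (hYf : CoveredByHyperplanes (frontier Y)) (hXi : IsPreconnected (interior X))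
    (hYi : IsPreconnected (interior Y)) (hU : ¬ IsPreconnected (interior (X ∪ Y))) :
    (X ∩ Y).Finite := by
  obtain ⟨s, hs, hs0, hfr⟩ := (hXf.union hYf).mono ((frontier_union_subset X Y).trans
    (union_subset_union inter_subset_left inter_subset_right))
  refine (hs.crossingPoints hE hs0).subset fun x hx ↦ by_contra fun hx' ↦ hU ?_
  obtain ⟨ε, hε, hP⟩ :=
    exists_isPreconnected_ball_inter_interior (hXc.union hYc) hs hs0 hfr (Or.inl hx.1) hx'
  have hmeets : ∀ Z, closure (interior Z) = Z → x ∈ Z → Z ⊆ X ∪ Y →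
      (interior Z ∩ (ball x ε ∩ interior (X ∪ Y))).Nonempty := fun Z hZ hxZ hZU ↦ by
    obtain ⟨z, hzb, hzZ⟩ := mem_closure_iff.1 (hZ.symm ▸ hxZ) _ isOpen_ball (mem_ball_self hε)
    exact ⟨z, hzZ, hzb, interior_mono hZU hzZ⟩
  exact isPreconnected_interior_union_of_bridge hX hY hXi hYi hP inter_subset_right
    (hmeets X hX hx.1 subset_union_left) (hmeets Y hY hx.2 subset_union_right)

end Plane

section DotProduct

variable {ι : Type*} [Fintype ι]

noncomputable def dotProductCLM (a : ι → ℝ) : StrongDual ℝ (ι → ℝ) :=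
  LinearMap.toContinuousLinearMap (dotProductBilin ℝ ℝ a)

theorem dotProductCLM_ne_zero {a : ι → ℝ} (ha : a ≠ 0) : dotProductCLM a ≠ 0 := by
  classical
  obtain ⟨i, hi⟩ := Function.ne_iff.1 ha
  intro h
  have := congrArg (· (Pi.single i 1)) h
  simp only [dotProductCLM, LinearMap.coe_toContinuousLinearMap', dotProductBilin_apply_apply,
    dotProduct_single, mul_one, zero_apply] at this
  exact hi this

theorem setOf_sum_mul_le (a : ι → ℝ) (c : ℝ) :
    {x | ∑ i, a i * x i ≤ c} = dotProductCLM a ⁻¹' Iic c := rfl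

end DotProduct

namespace IsPolygon

variable {X : Set (Fin 2 → ℝ)}

theorem isClosed (h : IsPolygon X) : IsClosed X := by
  induction h with
  | halfplane a c _ => exact isClosed_Iic.preimage (dotProductCLM a).continuous
  | sup _ _ _ _ hX hY => exact hX.union hY
  | inf => exact isClosed_closure
  | compl => exact isClosed_closure

theorem closure_interior (h : IsPolygon X) : closure (interior X) = X := by
  induction h with
  | halfplane a c ha =>
    have hopen := (dotProductCLM a).isOpenMap_of_ne_zero (dotProductCLM_ne_zero ha)
    have hcont := (dotProductCLM a).continuous
    rw [setOf_sum_mul_le, ← hopen.preimage_interior_eq_interior_preimage hcont,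
      ← hopen.preimage_closure_eq_closure_preimage hcont, interior_Iic, closure_Iio]
  | sup X Y hX hY ihX ihY =>
    refine (hX.isClosed.union hY.isClosed).closure_interior_subset.antisymm ?_
    calc X ∪ Y = closure (interior X ∪ interior Y) := by rw [closure_union, ihX, ihY]
      _ ⊆ closure (interior (X ∪ Y)) :=
        closure_mono (union_subset (interior_mono subset_union_left)
          (interior_mono subset_union_right))
  | inf => exact closure_interior_idem
  | compl X hX _ =>
    have := closure_interior_idem (s := Xᶜ)
    rwa [hX.isClosed.isOpen_compl.interior_eq] at this

theorem coveredByHyperplanes_frontier (h : IsPolygon X) :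
    CoveredByHyperplanes (frontier X) := by
  induction h with
  | halfplane a c ha =>
    have hopen := (dotProductCLM a).isOpenMap_of_ne_zero (dotProductCLM_ne_zero ha)
    rw [setOf_sum_mul_le, ← hopen.preimage_frontier_eq_frontier_preimage
      (dotProductCLM a).continuous, frontier_Iic]
    exact coveredByHyperplanes_preimage_singleton (dotProductCLM_ne_zero ha) c
  | sup X Y _ _ hX hY =>
    exact (hX.union hY).mono ((frontier_union_subset X Y).trans
      (union_subset_union inter_subset_left inter_subset_right))
  | inf X Y _ _ hX hY =>
    exact (hX.union hY).mono (frontier_closure_subset.trans (frontier_interior_subset.trans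
      ((frontier_inter_subset X Y).trans
        (union_subset_union inter_subset_left inter_subset_right))))
  | compl X _ hX =>
    exact hX.mono (frontier_closure_subset.trans (frontier_compl X).subset)

theorem finite_inter {Y : Set (Fin 2 → ℝ)} (hX : IsPolygon X) (hY : IsPolygon Y)
    (hXi : IsConnected (interior X)) (hYi : IsConnected (interior Y))
    (hU : ¬ IsConnected (interior (X ∪ Y))) : (X ∩ Y).Finite :=
  finite_inter_of_not_isPreconnected_interior_union (finrank_fin_fun ℝ) hX.isClosed
    hY.isClosed hX.closure_interior hY.closure_interior hX.coveredByHyperplanes_frontier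
    hY.coveredByHyperplanes_frontier hXi.isPreconnected hYi.isPreconnected
    fun hU' ↦ hU ⟨hXi.nonempty.mono (interior_mono subset_union_left), hU'⟩

end IsPolygon

/-- No three regular closed polygons in `ℝ²`, each with connected interior, can have a
total union with connected interior while neither `r₁ ∪ r₂` nor `r₁ ∪ r₃` has connected
interior. -/
theorem no_wiggly_polygons_in_plane :
    ¬ ∃ r₁ r₂ r₃ : Set (Fin 2 → ℝ),
      IsPolygon r₁ ∧ IsPolygon r₂ ∧ IsPolygon r₃ ∧
      IsConnected (interior r₁) ∧ IsConnected (interior r₂) ∧ IsConnected (interior r₃) ∧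
      IsConnected (interior (r₁ ∪ r₂ ∪ r₃)) ∧
      ¬ IsConnected (interior (r₁ ∪ r₂)) ∧
      ¬ IsConnected (interior (r₁ ∪ r₃)) := by
  rintro ⟨r₁, r₂, r₃, P₁, P₂, P₃, C₁, C₂, C₃, C₁₂₃, N₁₂, N₁₃⟩
  have hfinite : (r₁ ∩ (r₂ ∪ r₃)).Finite := by
    rw [inter_union_distrib_left]
    exact (P₁.finite_inter P₂ C₁ C₂ N₁₂).union (P₁.finite_inter P₃ C₁ C₃ N₁₃)
  have hrank : 1 < Module.rank ℝ (Fin 2 → ℝ) := by rw [rank_fin_fun]; norm_num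
  refine not_isPreconnected_interior_union_of_finite_inter hrank P₁.isClosed
    (P₂.isClosed.union P₃.isClosed) hfinite C₁.nonempty
    (C₂.nonempty.mono (interior_mono subset_union_left)) ?_
  rw [← union_assoc]
  exact C₁₂₃.isPreconnected
end

section
/- Every regular closed polyhedron in ℝⁿ (an element of the Boolean subalgebra of RC(ℝⁿ) generated by closed half-spaces) has finitely many connected components. -/
/-- Membership in the Boolean subalgebra of `RC(ℝⁿ)` generated by closed half-spaces:
regular closed polyhedra. -/
inductive IsPolyhedron (n : ℕ) : Set (Fin n → ℝ) → Prop
  | halfspace (a : Fin n → ℝ) (c : ℝ) (ha : a ≠ 0) :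
      IsPolyhedron n {x | ∑ i, a i * x i ≤ c}
  | sup (X Y : Set (Fin n → ℝ)) : IsPolyhedron n X → IsPolyhedron n Y → IsPolyhedron n (X ∪ Y)
  | inf (X Y : Set (Fin n → ℝ)) : IsPolyhedron n X → IsPolyhedron n Y →
      IsPolyhedron n (closure (interior (X ∩ Y)))
  | compl (X : Set (Fin n → ℝ)) : IsPolyhedron n X → IsPolyhedron n (closure Xᶜ)

/-!
By induction along the generation of a polyhedron `X`, both `X` and `-X` are finite unions of
closures of open convex sets. The only non-trivial step is the product: for open `A`, `B` one
has `cl (int (cl A ∩ cl B)) = cl (A ∩ B)`, so the product of `⋃ cl Uᵢ` and `⋃ cl Vⱼ` is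
`⋃ cl (Uᵢ ∩ Vⱼ)`; the complement of a sum is the product of the complements by the same
identity. The closure of a convex set is connected, so each of the finitely many pieces lies in
one component.
-/

open Set

section Topology

variable {α : Type*} [TopologicalSpace α]

theorem IsOpen.closure_interior_closure {A : Set α} (hA : IsOpen A) :
    closure (interior (closure A)) = closure A := by
  simpa only [hA.interior_eq] using closure_interior_idem (s := A)

theorem IsOpen.closure_interior_closure_inter_closure {A B : Set α} (hA : IsOpen A)
    (hB : IsOpen B) : closure (interior (closure A ∩ closure B)) = closure (A ∩ B) := by
  refine subset_antisymm (closure_minimal ?_ isClosed_closure) (closure_mono ?_)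
  · set W := interior (closure A ∩ closure B)
    have hWA : W ∩ A ⊆ closure (A ∩ B) := fun x hx =>
      closure_mono (inter_subset_inter_left B inter_subset_right)
        ((isOpen_interior.inter hA).inter_closure ⟨hx, (interior_subset hx.1).2⟩)
    exact fun x hx => closure_minimal hWA isClosed_closure
      (isOpen_interior.inter_closure ⟨hx, (interior_subset hx).1⟩)
  · exact (hA.inter hB).subset_interior_iff.2 (inter_subset_inter subset_closure subset_closure)

theorem IsClosed.closure_compl_closure_interior_inter {X Y : Set α} (hX : IsClosed X)
    (hY : IsClosed Y) : closure (closure (interior (X ∩ Y)))ᶜ = closure Xᶜ ∪ closure Yᶜ := by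
  rw [← interior_compl, ← closure_compl, compl_inter,
    (hX.isOpen_compl.union hY.isOpen_compl).closure_interior_closure, closure_union]

theorem IsClosed.closure_compl_union {X Y : Set α} (hX : IsClosed X) (hY : IsClosed Y) :
    closure (X ∪ Y)ᶜ = closure (interior (closure Xᶜ ∩ closure Yᶜ)) := by
  rw [hX.isOpen_compl.closure_interior_closure_inter_closure hY.isOpen_compl, compl_union]

theorem finite_connectedComponentIn_of_eq_biUnion {ι : Type*} {X : Set α} {s : Set ι}
    (hs : s.Finite) {S : ι → Set α} (hS : ∀ i ∈ s, IsPreconnected (S i))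
    (hX : X = ⋃ i ∈ s, S i) : {C | ∃ x ∈ X, C = connectedComponentIn X x}.Finite := by
  refine (hs.biUnion (t := fun i => connectedComponentIn X '' S i)
    fun i hi => Subsingleton.finite ?_).subset ?_
  · rintro _ ⟨x, hx, rfl⟩ _ ⟨y, hy, rfl⟩
    have hSX : S i ⊆ X := hX ▸ subset_biUnion_of_mem hi
    exact connectedComponentIn_eq ((hS i hi).subset_connectedComponentIn hx hSX hy)
  · rintro C ⟨x, hx, rfl⟩
    obtain ⟨i, hi, hxi⟩ := mem_iUnion₂.1 (hX ▸ hx)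
    exact mem_biUnion hi (mem_image_of_mem _ hxi)

end Topology

section Convex

variable {E : Type*} [AddCommGroup E] [Module ℝ E] [TopologicalSpace E]

theorem ContinuousLinearMap.closure_setOf_lt [ContinuousAdd E] [ContinuousSMul ℝ E]
    {f : StrongDual ℝ E} (hf : f ≠ 0) (c : ℝ) : closure {x | f x < c} = {x | f x ≤ c} := by
  change closure (f ⁻¹' Iio c) = f ⁻¹' Iic c
  rw [← (f.isOpenMap_of_ne_zero hf).preimage_closure_eq_closure_preimage f.continuous,
    closure_Iio]

def IsFinUnionClosureOpenConvex (X : Set E) : Prop :=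
  ∃ F : Set (Set E), F.Finite ∧ (∀ U ∈ F, IsOpen U ∧ Convex ℝ U) ∧ X = ⋃ U ∈ F, closure U

namespace IsFinUnionClosureOpenConvex

variable {X Y : Set E}

theorem closure_of_isOpen_of_convex {U : Set E} (hU : IsOpen U) (hc : Convex ℝ U) :
    IsFinUnionClosureOpenConvex (closure U) :=
  ⟨{U}, finite_singleton U, by simpa using And.intro hU hc, by simp⟩

theorem exists_isOpen_eq_closure (h : IsFinUnionClosureOpenConvex X) :
    ∃ A, IsOpen A ∧ X = closure A := by
  obtain ⟨F, hF, hFo, rfl⟩ := h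
  exact ⟨⋃ U ∈ F, U, isOpen_biUnion fun U hU => (hFo U hU).1, (hF.closure_biUnion _).symm⟩

theorem isClosed (h : IsFinUnionClosureOpenConvex X) : IsClosed X := by
  obtain ⟨A, -, rfl⟩ := h.exists_isOpen_eq_closure
  exact isClosed_closure

theorem closure_interior_eq (h : IsFinUnionClosureOpenConvex X) : closure (interior X) = X := by
  obtain ⟨A, hA, rfl⟩ := h.exists_isOpen_eq_closure
  exact hA.closure_interior_closure

theorem union (hX : IsFinUnionClosureOpenConvex X) (hY : IsFinUnionClosureOpenConvex Y) :
    IsFinUnionClosureOpenConvex (X ∪ Y) := by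
  obtain ⟨F, hF, hFo, rfl⟩ := hX
  obtain ⟨G, hG, hGo, rfl⟩ := hY
  exact ⟨F ∪ G, hF.union hG, fun U hU => hU.elim (hFo U) (hGo U), (biUnion_union F G _).symm⟩

theorem closure_interior_inter (hX : IsFinUnionClosureOpenConvex X)
    (hY : IsFinUnionClosureOpenConvex Y) :
    IsFinUnionClosureOpenConvex (closure (interior (X ∩ Y))) := by
  obtain ⟨F, hF, hFo, rfl⟩ := hX
  obtain ⟨G, hG, hGo, rfl⟩ := hY
  refine ⟨image2 (· ∩ ·) F G, hF.image2 _ hG, ?_, ?_⟩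
  · rintro _ ⟨U, hU, V, hV, rfl⟩
    exact ⟨(hFo U hU).1.inter (hGo V hV).1, (hFo U hU).2.inter (hGo V hV).2⟩
  · rw [← hF.closure_biUnion, ← hG.closure_biUnion,
      (isOpen_biUnion fun U hU => (hFo U hU).1).closure_interior_closure_inter_closure
        (isOpen_biUnion fun V hV => (hGo V hV).1), biUnion_image2, iUnion₂_inter]
    simp only [inter_iUnion₂]
    rw [hF.closure_biUnion]
    simp_rw [hG.closure_biUnion]

theorem finite_connectedComponentIn [ContinuousAdd E] [ContinuousSMul ℝ E]
    (h : IsFinUnionClosureOpenConvex X) :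
    {C | ∃ x ∈ X, C = connectedComponentIn X x}.Finite := by
  obtain ⟨F, hF, hFo, rfl⟩ := h
  exact finite_connectedComponentIn_of_eq_biUnion hF
    (fun U hU => (hFo U hU).2.isPreconnected.closure) rfl

theorem setOf_le [ContinuousAdd E] [ContinuousSMul ℝ E] {f : StrongDual ℝ E} (hf : f ≠ 0)
    (c : ℝ) : IsFinUnionClosureOpenConvex {x | f x ≤ c} ∧
      IsFinUnionClosureOpenConvex (closure {x | f x ≤ c}ᶜ) := by
  have hlin : IsLinearMap ℝ f := f.toLinearMap.isLinear
  constructor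
  · rw [← f.closure_setOf_lt hf]
    exact closure_of_isOpen_of_convex (isOpen_lt f.continuous continuous_const)
      (convex_halfSpace_lt hlin c)
  · simp_rw [compl_ofPred, not_le]
    exact closure_of_isOpen_of_convex (isOpen_lt continuous_const f.continuous)
      (convex_halfSpace_gt hlin c)

end IsFinUnionClosureOpenConvex

end Convex

theorem IsPolyhedron.isFinUnionClosureOpenConvex {n : ℕ} {X : Set (Fin n → ℝ)}
    (h : IsPolyhedron n X) :
    IsFinUnionClosureOpenConvex X ∧ IsFinUnionClosureOpenConvex (closure Xᶜ) := by
  induction h with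
  | halfspace a c ha =>
    set f : StrongDual ℝ (Fin n → ℝ) := ∑ i, a i • ContinuousLinearMap.proj i
    have hf : ∀ x, f x = ∑ i, a i * x i := fun x => by simp [f]
    have hf0 : f ≠ 0 := fun h0 => ha <| funext fun i => by
      simpa [hf, Pi.single_apply] using congr($h0 (Pi.single i 1))
    simpa only [hf] using IsFinUnionClosureOpenConvex.setOf_le hf0 c
  | sup X Y _ _ hX hY =>
    refine ⟨hX.1.union hY.1, ?_⟩
    rw [hX.1.isClosed.closure_compl_union hY.1.isClosed]
    exact hX.2.closure_interior_inter hY.2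
  | inf X Y _ _ hX hY =>
    refine ⟨hX.1.closure_interior_inter hY.1, ?_⟩
    rw [hX.1.isClosed.closure_compl_closure_interior_inter hY.1.isClosed]
    exact hX.2.union hY.2
  | compl X _ hX =>
    refine ⟨hX.2, ?_⟩
    rw [← interior_eq_compl_closure_compl, hX.1.closure_interior_eq]
    exact hX.1

/-- Every regular closed polyhedron in `ℝⁿ` has finitely many connected components. -/
theorem polyhedron_finitely_many_components
    (n : ℕ) (X : Set (Fin n → ℝ)) (hX : IsPolyhedron n X) :
    {C : Set (Fin n → ℝ) | ∃ x ∈ X, C = connectedComponentIn X x}.Finite :=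
  hX.isFinUnionClosureOpenConvex.1.finite_connectedComponentIn
end
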